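/- arXiv:math/0503550 — 7 statements merged into one kernel-verified Lean document; each statement's English description precedes it below -/
import Mathlib

section
/- Let (Ω, 𝓕, P) be a probability space and N a convex set of probability measures on (Ω,𝓕), each absolutely continuous with respect to P, such that N ∩ ℙ ≠ ∅. If f is a random variable with f ∈ L¹(Q) for every Q ∈ N, then sup{E_Q[f] : Q ∈ N} = sup{E_Q[f] : Q ∈ N ∩ ℙ} (equality in ℝ ∪ {+∞}). -/
/-!
Given `Q ∈ N` and some `Q₀ ∈ N` equivalent to `P`, every mixture `t • Q + (1 - t) • Q₀` with
`t < 1` lies in `N` and dominates `P`, because it charges every set that `Q₀`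
charges. Its `f`-expectation `t E_Q[f] + (1 - t) E_{Q₀}[f]` tends to `E_Q[f]` as `t → 1`, so
`E_Q[f]` is bounded by the supremum over the equivalent measures.
-/

open MeasureTheory Filter Topology Set

theorem integral_ofReal_smul_add_ofReal_smul {Ω E : Type*} [MeasurableSpace Ω]
    [NormedAddCommGroup E] [NormedSpace ℝ E] {μ ν : Measure Ω} {f : Ω → E}
    (hμ : Integrable f μ) (hν : Integrable f ν) {s t : ℝ} (hs : 0 ≤ s) (ht : 0 ≤ t) :
    ∫ x, f x ∂(ENNReal.ofReal s • μ + ENNReal.ofReal t • ν) =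
      s • (∫ x, f x ∂μ) + t • (∫ x, f x ∂ν) := by
  rw [integral_add_measure (hμ.smul_measure ENNReal.ofReal_ne_top)
    (hν.smul_measure ENNReal.ofReal_ne_top), integral_smul_measure, integral_smul_measure,
    ENNReal.toReal_ofReal hs, ENNReal.toReal_ofReal ht]

theorem EReal.coe_le_of_forall_convexCombination_le {a b : ℝ} {x : EReal}
    (h : ∀ t ∈ Ioo (0 : ℝ) 1, ((t * a + (1 - t) * b : ℝ) : EReal) ≤ x) : (a : EReal) ≤ x := by
  have hlim : Tendsto (fun t : ℝ => ((t * a + (1 - t) * b : ℝ) : EReal)) (𝓝[<] 1) (𝓝 a) := by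
    refine EReal.tendsto_coe.2 ((Continuous.tendsto ?_ 1).mono_left nhdsWithin_le_nhds |>.trans ?_)
    · fun_prop
    · norm_num
  exact le_of_tendsto hlim (eventually_of_mem (Ioo_mem_nhdsLT zero_lt_one) h)

theorem sup_integral_eq_sup_over_equivalent_general
    {Ω : Type*} [MeasurableSpace Ω] (P : Measure Ω)
    (N : Set (Measure Ω))
    (hconv : ∀ Q ∈ N, ∀ R ∈ N, ∀ t : ℝ, 0 ≤ t → t ≤ 1 →
      ENNReal.ofReal t • Q + ENNReal.ofReal (1 - t) • R ∈ N)
    (hNP : ∃ Q ∈ N, P ≪ Q)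
    (f : Ω → ℝ) (hf : ∀ Q ∈ N, Integrable f Q) :
    sSup ((fun Q : Measure Ω => ((∫ x, f x ∂Q : ℝ) : EReal)) '' N) =
      sSup ((fun Q : Measure Ω => ((∫ x, f x ∂Q : ℝ) : EReal)) '' {Q ∈ N | P ≪ Q}) := by
  obtain ⟨Q₀, hQ₀N, hPQ₀⟩ := hNP
  refine le_antisymm (sSup_le ?_) (sSup_le_sSup (image_mono fun Q hQ => hQ.1))
  rintro _ ⟨Q, hQN, rfl⟩
  refine EReal.coe_le_of_forall_convexCombination_le (b := ∫ x, f x ∂Q₀) fun t ht => le_sSup ?_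
  have hmix_equiv : P ≪ ENNReal.ofReal t • Q + ENNReal.ofReal (1 - t) • Q₀ :=
    (hPQ₀.smul_right (by simpa using ht.2)).add_right' _
  refine ⟨_, ⟨hconv Q hQN Q₀ hQ₀N t ht.1.le ht.2.le, hmix_equiv⟩, ?_⟩
  simp only [integral_ofReal_smul_add_ofReal_smul (hf Q hQN) (hf Q₀ hQ₀N) ht.1.le
    (sub_nonneg.2 ht.2.le), smul_eq_mul]

/-- Remark 2 of Biagini–Frittelli, integrable case: if `N` is a convex set of probability
measures absolutely continuous w.r.t. `P` containing at least one measure equivalent to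
`P`, and `f ∈ L¹(Q)` for every `Q ∈ N`, then
`sup {E_Q[f] : Q ∈ N} = sup {E_Q[f] : Q ∈ N ∩ ℙ}` in `ℝ ∪ {+∞}`. -/
theorem sup_integral_eq_sup_over_equivalent
    {Ω : Type*} [MeasurableSpace Ω] (P : Measure Ω) [IsProbabilityMeasure P]
    (N : Set (Measure Ω))
    (hprob : ∀ Q ∈ N, IsProbabilityMeasure Q)
    (habs : ∀ Q ∈ N, Q ≪ P)
    (hconv : ∀ Q ∈ N, ∀ R ∈ N, ∀ t : ℝ, 0 ≤ t → t ≤ 1 →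
      ENNReal.ofReal t • Q + ENNReal.ofReal (1 - t) • R ∈ N)
    (hNP : ∃ Q ∈ N, P ≪ Q)
    (f : Ω → ℝ) (hf : ∀ Q ∈ N, Integrable f Q) :
    sSup ((fun Q : Measure Ω => ((∫ x, f x ∂Q : ℝ) : EReal)) '' N) =
      sSup ((fun Q : Measure Ω => ((∫ x, f x ∂Q : ℝ) : EReal)) '' {Q ∈ N | P ≪ Q}) :=
  sup_integral_eq_sup_over_equivalent_general P N hconv hNP f hf
end

section
/- Let (Ω, 𝓕, P) be a probability space and N a convex set of probability measures on (Ω,𝓕), each absolutely continuous with respect to P, such that N ∩ ℙ ≠ ∅. If f is a random variable that is P-essentially bounded from below, then sup{E_Q[f] : Q ∈ N} = sup{E_Q[f] : Q ∈ N ∩ ℙ}, where for f essentially bounded from below each E_Q[f] is well defined in (−∞, +∞] and the equality holds in ℝ ∪ {+∞}. -/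
/-!
Mix a measure `Q ∈ N` with a measure `R ∈ N` equivalent to `P`: for `t < 1` the mixture
`t Q + (1 - t) R` lies in `N` and is equivalent to `P`. Since `f` is bounded from below, the
negative parts of all expectations are finite, so `E_{tQ + (1-t)R}[f]` is bounded below by
`t E_Q[f⁺] - (t E_Q[f⁻] + (1 - t) E_R[f⁻])`, which tends to `E_Q[f]` as `t → 1` even when
`E_Q[f⁺]` or `E_R[f⁺]` is infinite.
-/

open MeasureTheory
open scoped ENNReal

/-- The extended expectation `E_Q[f] ∈ [-∞, +∞]` of a real random variable, as an `EReal`;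
for `f` essentially bounded from below it takes values in `(-∞, +∞]`. -/
noncomputable def extExp {Ω : Type*} [MeasurableSpace Ω] (Q : MeasureTheory.Measure Ω)
    (f : Ω → ℝ) : EReal :=
  ((∫⁻ x, ENNReal.ofReal (f x) ∂Q : ℝ≥0∞) : EReal) -
    ((∫⁻ x, ENNReal.ofReal (-(f x)) ∂Q : ℝ≥0∞) : EReal)

open Filter Set Topology

namespace MeasureTheory

variable {Ω : Type*} [MeasurableSpace Ω]

theorem lintegral_ofReal_neg_ne_top_of_ae_le {μ : Measure Ω} [IsFiniteMeasure μ]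
    {f : Ω → ℝ} {c : ℝ} (hc : ∀ᵐ x ∂μ, -c ≤ f x) :
    ∫⁻ x, ENNReal.ofReal (-f x) ∂μ ≠ ∞ := by
  have hle : ∫⁻ x, ENNReal.ofReal (-f x) ∂μ ≤ ∫⁻ _, ENNReal.ofReal c ∂μ :=
    lintegral_mono_ae <| hc.mono fun x hx => ENNReal.ofReal_le_ofReal (by linarith)
  exact ne_top_of_le_ne_top (lintegral_const_lt_top ENNReal.ofReal_ne_top).ne hle

theorem absolutelyContinuous_mixture {P μ ν : Measure Ω} (hν : P ≪ ν) (a : ℝ≥0∞)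
    {b : ℝ≥0∞} (hb : b ≠ 0) : P ≪ a • μ + b • ν :=
  (hν.trans (Measure.absolutelyContinuous_smul hb)).add_right' _

theorem lintegral_mixture (μ ν : Measure Ω) (a b : ℝ≥0∞) (g : Ω → ℝ≥0∞) :
    ∫⁻ x, g x ∂(a • μ + b • ν) = a * ∫⁻ x, g x ∂μ + b * ∫⁻ x, g x ∂ν := by
  rw [lintegral_add_measure, lintegral_smul_measure, lintegral_smul_measure, smul_eq_mul,
    smul_eq_mul]

end MeasureTheory

theorem EReal.tendsto_coe_ennreal_sub {α : Type*} {l : Filter α} {x y : α → ℝ≥0∞}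
    {a b : ℝ≥0∞} (hx : Tendsto x l (𝓝 a)) (hy : Tendsto y l (𝓝 b)) (hb : b ≠ ∞) :
    Tendsto (fun i => (x i : EReal) - y i) l (𝓝 ((a : EReal) - b)) := by
  have hb' : -(b : EReal) ≠ ⊥ := by
    rwa [Ne, EReal.neg_eq_bot_iff, EReal.coe_ennreal_eq_top_iff]
  refine (EReal.continuousAt_add (.inr hb') (.inl (EReal.coe_ennreal_ne_bot a))).tendsto.comp
    ((continuous_coe_ennreal_ereal.tendsto a).comp hx |>.prodMk_nhds
      ((continuous_coe_ennreal_ereal.tendsto b).comp hy).neg)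

section Mixture

variable {Ω : Type*} [MeasurableSpace Ω] {μ ν : Measure Ω} {f : Ω → ℝ}

theorem le_extExp_mixture (a b : ℝ≥0∞) :
    ((a * ∫⁻ x, ENNReal.ofReal (f x) ∂μ : ℝ≥0∞) : EReal) -
        ((a * ∫⁻ x, ENNReal.ofReal (-f x) ∂μ + b * ∫⁻ x, ENNReal.ofReal (-f x) ∂ν : ℝ≥0∞) :
          EReal) ≤
      extExp (a • μ + b • ν) f := by
  rw [extExp, lintegral_mixture, lintegral_mixture]
  exact EReal.sub_le_sub (EReal.coe_ennreal_le_coe_ennreal_iff.2 le_self_add) le_rfl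

theorem extExp_le_of_forall_mixture_le (hμ : ∫⁻ x, ENNReal.ofReal (-f x) ∂μ ≠ ∞)
    (hν : ∫⁻ x, ENNReal.ofReal (-f x) ∂ν ≠ ∞) {e : EReal}
    (he : ∀ t ∈ Ioo (0 : ℝ) 1, extExp (ENNReal.ofReal t • μ + ENNReal.ofReal (1 - t) • ν) f ≤ e) :
    extExp μ f ≤ e := by
  have hcoef : Tendsto (fun t : ℝ => ENNReal.ofReal t) (𝓝 1) (𝓝 1) := by
    simpa using ENNReal.tendsto_ofReal (tendsto_id (x := 𝓝 (1 : ℝ)))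
  have hcoef' : Tendsto (fun t : ℝ => ENNReal.ofReal (1 - t)) (𝓝 1) (𝓝 0) := by
    simpa using ENNReal.tendsto_ofReal ((continuous_sub_left (1 : ℝ)).tendsto 1)
  have hpos : Tendsto (fun t : ℝ => ENNReal.ofReal t * ∫⁻ x, ENNReal.ofReal (f x) ∂μ) (𝓝 1)
      (𝓝 (∫⁻ x, ENNReal.ofReal (f x) ∂μ)) := by
    simpa using ENNReal.Tendsto.mul_const hcoef (.inl one_ne_zero)
  have hneg : Tendsto (fun t : ℝ => ENNReal.ofReal t * ∫⁻ x, ENNReal.ofReal (-f x) ∂μ +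
      ENNReal.ofReal (1 - t) * ∫⁻ x, ENNReal.ofReal (-f x) ∂ν) (𝓝 1)
      (𝓝 (∫⁻ x, ENNReal.ofReal (-f x) ∂μ)) := by
    simpa using (ENNReal.Tendsto.mul_const hcoef (.inl one_ne_zero)).add
      (ENNReal.Tendsto.mul_const hcoef' (.inr hν))
  rw [extExp]
  refine le_of_tendsto ((EReal.tendsto_coe_ennreal_sub hpos hneg hμ).mono_left
    (nhdsWithin_le_nhds (s := Iio 1))) ?_
  filter_upwards [Ioo_mem_nhdsLT (zero_lt_one' ℝ)] with t ht
  exact (le_extExp_mixture _ _).trans (he t ht)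

end Mixture

theorem sup_extExp_eq_sup_over_equivalent_general
    {Ω : Type*} [MeasurableSpace Ω] (P : Measure Ω)
    (N : Set (Measure Ω))
    (hprob : ∀ Q ∈ N, IsProbabilityMeasure Q)
    (habs : ∀ Q ∈ N, Q ≪ P)
    (hconv : ∀ Q ∈ N, ∀ R ∈ N, ∀ t : ℝ, 0 ≤ t → t ≤ 1 →
      ENNReal.ofReal t • Q + ENNReal.ofReal (1 - t) • R ∈ N)
    (hNP : ∃ Q ∈ N, P ≪ Q)
    (f : Ω → ℝ)
    (hbb : ∃ c : ℝ, ∀ᵐ x ∂P, -c ≤ f x) :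
    sSup ((fun Q : Measure Ω => extExp Q f) '' N) =
      sSup ((fun Q : Measure Ω => extExp Q f) '' {Q ∈ N | P ≪ Q}) := by
  obtain ⟨R, hRN, hPR⟩ := hNP
  obtain ⟨c, hc⟩ := hbb
  have hneg : ∀ Q ∈ N, ∫⁻ x, ENNReal.ofReal (-f x) ∂Q ≠ ∞ := fun Q hQ =>
    have := hprob Q hQ
    lintegral_ofReal_neg_ne_top_of_ae_le ((habs Q hQ).ae_le hc)
  refine le_antisymm (sSup_le ?_) (sSup_le_sSup (image_mono fun Q hQ => hQ.1))
  rintro _ ⟨Q, hQN, rfl⟩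
  refine extExp_le_of_forall_mixture_le (hneg Q hQN) (hneg R hRN) fun t ht => le_sSup ?_
  have hequiv : P ≪ ENNReal.ofReal t • Q + ENNReal.ofReal (1 - t) • R :=
    absolutelyContinuous_mixture hPR _ (ENNReal.ofReal_pos.2 (sub_pos.2 ht.2)).ne'
  exact ⟨_, ⟨hconv Q hQN R hRN t ht.1.le ht.2.le, hequiv⟩, rfl⟩

/-- Remark 2 of Biagini–Frittelli, bounded-from-below case: if `N` is a convex set of
probability measures absolutely continuous w.r.t. `P` containing at least one measure
equivalent to `P`, and `f` is a random variable `P`-essentially bounded from below, then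
`sup {E_Q[f] : Q ∈ N} = sup {E_Q[f] : Q ∈ N ∩ ℙ}`, the expectations being well defined in
`(-∞, +∞]` and the equality holding in `ℝ ∪ {+∞}`. -/
theorem sup_extExp_eq_sup_over_equivalent
    {Ω : Type*} [MeasurableSpace Ω] (P : Measure Ω) [IsProbabilityMeasure P]
    (N : Set (Measure Ω))
    (hprob : ∀ Q ∈ N, IsProbabilityMeasure Q)
    (habs : ∀ Q ∈ N, Q ≪ P)
    (hconv : ∀ Q ∈ N, ∀ R ∈ N, ∀ t : ℝ, 0 ≤ t → t ≤ 1 →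
      ENNReal.ofReal t • Q + ENNReal.ofReal (1 - t) • R ∈ N)
    (hNP : ∃ Q ∈ N, P ≪ Q)
    (f : Ω → ℝ) (hfm : AEStronglyMeasurable f P)
    (hbb : ∃ c : ℝ, ∀ᵐ x ∂P, -c ≤ f x) :
    sSup ((fun Q : Measure Ω => extExp Q f) '' N) =
      sSup ((fun Q : Measure Ω => extExp Q f) '' {Q ∈ N | P ≪ Q}) :=
  sup_extExp_eq_sup_over_equivalent_general P N hprob habs hconv hNP f hbb
end

section
/- Let (Ω, 𝓕, P) be a probability space and let Φ : (0,∞) → ℝ be a convex function satisfying the growth condition G(Φ) and with Φ(0) < +∞. Let Q₀ and Q₁ be probability measures on (Ω,𝓕) absolutely continuous with respect to P, let x ∈ (0,1), and set Q = xQ₁ + (1−x)Q₀. Then Φ(dQ/dP) ∈ L¹(P) if and only if both Φ(dQ₀/dP) ∈ L¹(P) and Φ(dQ₁/dP) ∈ L¹(P). -/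
open MeasureTheory Filter

open Set

/-- Extend convexity from `Ioi 0` to `Ici 0` using right-continuity at `0`. -/
lemma my_convexOn_Ici {Φ : ℝ → ℝ} (hconv : ConvexOn ℝ (Set.Ioi 0) Φ)
    (h0 : Tendsto Φ (nhdsWithin 0 (Set.Ioi 0)) (nhds (Φ 0))) :
    ConvexOn ℝ (Set.Ici 0) Φ := by
  have hcont : ContinuousOn Φ (Set.Ioi 0) := hconv.continuousOn isOpen_Ioi
  -- key sub-lemma for one endpoint equal to 0
  have key : ∀ b t s : ℝ, 0 < b → 0 < t → 0 < s → t + s = 1 →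
      Φ (s * b) ≤ t * Φ 0 + s * Φ b := by
    intro b t s hb ht hs hts
    have hsb : (0:ℝ) < s * b := mul_pos hs hb
    have h1 : Tendsto (fun ε : ℝ => Φ (t * ε + s * b)) (nhdsWithin 0 (Set.Ioi 0))
        (nhds (Φ (s * b))) := by
      have hc : ContinuousAt Φ (s * b) :=
        hcont.continuousAt (isOpen_Ioi.mem_nhds hsb)
      have hl : Tendsto (fun ε : ℝ => t * ε + s * b) (nhdsWithin 0 (Set.Ioi 0))
          (nhds (s * b)) := by
        have : Tendsto (fun ε : ℝ => t * ε + s * b) (nhds 0) (nhds (t * 0 + s * b)) := by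
          exact ((continuous_const.mul continuous_id).add continuous_const).tendsto 0
        simpa using this.mono_left nhdsWithin_le_nhds
      exact hc.tendsto.comp hl
    have h2 : Tendsto (fun ε : ℝ => t * Φ ε + s * Φ b) (nhdsWithin 0 (Set.Ioi 0))
        (nhds (t * Φ 0 + s * Φ b)) :=
      ((tendsto_const_nhds.mul h0).add tendsto_const_nhds)
    refine le_of_tendsto_of_tendsto h1 h2 ?_
    filter_upwards [self_mem_nhdsWithin] with ε hε
    have := hconv.2 (mem_Ioi.2 hε) (mem_Ioi.2 hb) ht.le hs.le hts
    simpa [smul_eq_mul] using this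
  refine ⟨convex_Ici 0, ?_⟩
  intro a ha b hb t s ht hs hts
  rcases ht.eq_or_lt with rfl | ht'
  · simp at hts; simp [hts]
  rcases hs.eq_or_lt with rfl | hs'
  · simp at hts; simp [hts]
  rcases (mem_Ici.1 ha).eq_or_lt with rfl | ha'
  · rcases (mem_Ici.1 hb).eq_or_lt with rfl | hb'
    · simp [smul_eq_mul, ← add_mul, hts]
    · have := key b t s hb' ht' hs' hts
      simpa [smul_eq_mul] using this
  · rcases (mem_Ici.1 hb).eq_or_lt with rfl | hb'
    · have := key a s t ha' hs' ht' (by linarith)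
      simp only [smul_eq_mul]
      calc Φ (t * a + s * 0) = Φ (t * a) := by ring_nf
        _ ≤ s * Φ 0 + t * Φ a := this
        _ = t * Φ a + s * Φ 0 := by ring
    · exact hconv.2 (mem_Ioi.2 ha') (mem_Ioi.2 hb') ht hs hts

/-- A convex function on `Ici 0` is bounded below by an affine function. -/
lemma my_convex_lower_bound {Φ : ℝ → ℝ} (h : ConvexOn ℝ (Set.Ici 0) Φ) :
    ∃ A B : ℝ, 0 ≤ A ∧ 0 ≤ B ∧ ∀ y : ℝ, 0 ≤ y → -(A + B * y) ≤ Φ y := by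
  set c := Φ 2 - Φ 1 with hc
  set c' := Φ 3 - Φ 2 with hc'
  refine ⟨|Φ 2| + 2 * (|c| + |c'|), |c| + |c'|, by positivity, by positivity, ?_⟩
  intro y hy
  rcases lt_trichotomy y 2 with h2 | h2 | h2
  · have hs := h.slope_mono_adjacent (x := y) (y := 2) (z := 3)
      (mem_Ici.2 hy) (by norm_num) h2 (by norm_num)
    have h2y : (0:ℝ) < 2 - y := by linarith
    rw [div_le_div_iff₀ h2y (by norm_num)] at hs
    -- hs : (Φ 2 - Φ y) * 1 ≤ (Φ 3 - Φ 2) * (2 - y)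
    nlinarith [le_abs_self c', neg_abs_le c', neg_abs_le (Φ 2), abs_nonneg c,
      mul_nonneg (abs_nonneg c') hy, mul_nonneg (abs_nonneg c) hy]
  · subst h2
    nlinarith [neg_abs_le (Φ 2), abs_nonneg c, abs_nonneg c']
  · have hs := h.slope_mono_adjacent (x := 1) (y := 2) (z := y)
      (by norm_num) (mem_Ici.2 hy) (by norm_num) h2
    have h2y : (0:ℝ) < y - 2 := by linarith
    rw [div_le_div_iff₀ (by norm_num) h2y] at hs
    -- hs : (Φ 2 - Φ 1) * (y - 2) ≤ (Φ y - Φ 2) * (2 - 1)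
    nlinarith [le_abs_self c, neg_abs_le c, neg_abs_le (Φ 2), abs_nonneg c',
      mul_nonneg (abs_nonneg c) hy, mul_nonneg (abs_nonneg c') hy]

/-- Continuity on `Ici 0`. -/
lemma my_contOn_Ici {Φ : ℝ → ℝ} (hconv : ConvexOn ℝ (Set.Ioi 0) Φ)
    (h0 : Tendsto Φ (nhdsWithin 0 (Set.Ioi 0)) (nhds (Φ 0))) :
    ContinuousOn Φ (Set.Ici 0) := by
  intro y hy
  rcases (mem_Ici.1 hy).eq_or_lt with rfl | hy'
  · exact continuousWithinAt_Ioi_iff_Ici.1 h0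
  · exact ((hconv.continuousOn isOpen_Ioi).continuousAt
      (isOpen_Ioi.mem_nhds hy')).continuousWithinAt

/-- Given an affine lower bound on `Φ` and integrable nonneg `g`, integrability of `Φ ∘ g`
is equivalent to integrability of the positive part. -/
lemma my_integrable_iff_pos_part {Ω : Type*} [MeasurableSpace Ω] {P : Measure Ω}
    [IsFiniteMeasure P] {Φ : ℝ → ℝ} {A B : ℝ} (hlb : ∀ y : ℝ, 0 ≤ y → -(A + B * y) ≤ Φ y)
    {g : Ω → ℝ} (hgm : AEStronglyMeasurable (fun ω => Φ (g ω)) P)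
    (hg0 : ∀ ω, 0 ≤ g ω) (hgi : Integrable g P) :
    Integrable (fun ω => Φ (g ω)) P ↔ Integrable (fun ω => max (Φ (g ω)) 0) P := by
  constructor
  · intro h
    refine Integrable.mono h (hgm.sup aestronglyMeasurable_const) ?_
    filter_upwards with ω
    rw [Real.norm_eq_abs, Real.norm_eq_abs, abs_of_nonneg (le_max_right (Φ (g ω)) 0)]
    exact max_le (le_abs_self _) (abs_nonneg _)
  · intro h
    have hbi : Integrable (fun ω => max (Φ (g ω)) 0 + (|A| + |B| * g ω)) P :=
      h.add ((integrable_const |A|).add (hgi.const_mul |B|))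
    refine Integrable.mono' hbi hgm ?_
    filter_upwards with ω
    rw [Real.norm_eq_abs, abs_le]
    constructor
    · have h1 := hlb (g ω) (hg0 ω)
      have h2 : A ≤ |A| := le_abs_self A
      have h3 : B * g ω ≤ |B| * g ω := mul_le_mul_of_nonneg_right (le_abs_self B) (hg0 ω)
      have h4 : (0:ℝ) ≤ max (Φ (g ω)) 0 := le_max_right _ _
      linarith
    · have h1 : Φ (g ω) ≤ max (Φ (g ω)) 0 := le_max_left _ _
      have h2 : (0:ℝ) ≤ |A| := abs_nonneg A
      have h3 : (0:ℝ) ≤ |B| * g ω := mul_nonneg (abs_nonneg B) (hg0 ω)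
      linarith

/-- Core estimate: if `x * f ≤ g` pointwise, integrability of the positive part of `Φ ∘ g`
gives that of `Φ ∘ f`. -/
lemma my_pos_part_integrable {Ω : Type*} [MeasurableSpace Ω] {P : Measure Ω}
    [IsFiniteMeasure P] {Φ : ℝ → ℝ} (hIci : ConvexOn ℝ (Set.Ici 0) Φ)
    {a b x : ℝ} (ha : 0 < a) (hb : 0 < b) (hx0 : 0 < x)
    (hgr : ∀ y : ℝ, 0 < y → ∀ l ∈ Set.Icc (1:ℝ) x⁻¹,
      max (Φ (l * y)) 0 ≤ a * max (Φ y) 0 + b * (y + 1))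
    {f g : Ω → ℝ} (hf0 : ∀ ω, 0 ≤ f ω) (hfg : ∀ ω, x * f ω ≤ g ω)
    (hfm : AEStronglyMeasurable (fun ω => max (Φ (f ω)) 0) P)
    (hgi : Integrable g P)
    (hgmax : Integrable (fun ω => max (Φ (g ω)) 0) P) :
    Integrable (fun ω => max (Φ (f ω)) 0) P := by
  have hg0 : ∀ ω, 0 ≤ g ω := fun ω => le_trans (mul_nonneg hx0.le (hf0 ω)) (hfg ω)
  have hbound : ∀ ω, max (Φ (f ω)) 0 ≤
      max (Φ 0) 0 + max (Φ (g ω)) 0 + (a * max (Φ (g ω)) 0 + b * (g ω + 1)) := by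
    intro ω
    have hnn1 : (0:ℝ) ≤ a * max (Φ (g ω)) 0 + b * (g ω + 1) := by
      have := le_max_right (Φ (g ω)) 0
      have := hg0 ω
      positivity
    have hnn2 : (0:ℝ) ≤ max (Φ 0) 0 := le_max_right _ _
    have hnn3 : (0:ℝ) ≤ max (Φ (g ω)) 0 := le_max_right _ _
    rcases le_or_gt (f ω) (g ω) with hle | hlt
    · -- f ω ∈ [0, g ω] : bounded by max of endpoints
      have hseg : f ω ∈ segment ℝ (0:ℝ) (g ω) := by
        rw [segment_eq_Icc (hg0 ω)]
        exact ⟨hf0 ω, hle⟩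
      have := hIci.le_on_segment (mem_Ici.2 le_rfl) (mem_Ici.2 (hg0 ω)) hseg
      have hmax : max (Φ (f ω)) 0 ≤ max (Φ 0) 0 + max (Φ (g ω)) 0 := by
        refine max_le ?_ (by positivity)
        calc Φ (f ω) ≤ max (Φ 0) (Φ (g ω)) := this
          _ ≤ max (Φ 0) 0 + max (Φ (g ω)) 0 := by
            refine max_le (by linarith [le_max_left (Φ 0) (0:ℝ)])
              (by linarith [le_max_left (Φ (g ω)) (0:ℝ)])
      linarith
    · -- g ω < f ω : use the growth condition with l = f ω / g ω ∈ [1, x⁻¹]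
      have hfpos : 0 < f ω := lt_of_le_of_lt (hg0 ω) hlt
      have hgpos : 0 < g ω := lt_of_lt_of_le (mul_pos hx0 hfpos) (hfg ω)
      have hl1 : (1:ℝ) ≤ f ω / g ω := (one_le_div hgpos).2 hlt.le
      have hl2 : f ω / g ω ≤ x⁻¹ := by
        have h5 := mul_le_mul_of_nonneg_left (hfg ω) (inv_pos.2 hx0).le
        have h6 : x⁻¹ * (x * f ω) = f ω := by field_simp
        rw [div_le_iff₀ hgpos]
        linarith
      have := hgr (g ω) hgpos (f ω / g ω) ⟨hl1, hl2⟩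
      rw [div_mul_cancel₀ _ hgpos.ne'] at this
      linarith
  have hbi : Integrable (fun ω => max (Φ 0) 0 + max (Φ (g ω)) 0
      + (a * max (Φ (g ω)) 0 + b * (g ω + 1))) P :=
    ((integrable_const _).add hgmax).add
      ((hgmax.const_mul a).add ((hgi.add (integrable_const 1)).const_mul b))
  refine Integrable.mono' hbi hfm ?_
  · filter_upwards with ω
    rw [Real.norm_eq_abs, abs_of_nonneg (le_max_right (Φ (f ω)) 0)]
    exact hbound ω

/-- Proposition 18 of Biagini–Frittelli: let `Φ : (0,∞) → ℝ` be convex, satisfy the growth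
condition `G(Φ)`, and have finite limit at `0⁺` (i.e. `Φ(0) < +∞`, the value `Φ 0` being
this limit).  If `Q₀, Q₁ ≪ P` are probability measures, `x ∈ (0,1)` and
`Q = x Q₁ + (1-x) Q₀`, then `Φ(dQ/dP) ∈ L¹(P)` iff both `Φ(dQ₀/dP) ∈ L¹(P)` and
`Φ(dQ₁/dP) ∈ L¹(P)`. -/
theorem finite_generalized_entropy_convex_combination
    {Ω : Type*} [MeasurableSpace Ω] (P : Measure Ω) [IsProbabilityMeasure P]
    (Φ : ℝ → ℝ)
    (hΦconv : ConvexOn ℝ (Set.Ioi 0) Φ)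
    (hΦgrowth : ∀ l₀ l₁ : ℝ, 0 < l₀ → l₀ ≤ l₁ → ∃ a : ℝ, 0 < a ∧ ∃ b : ℝ, 0 < b ∧
      ∀ y : ℝ, 0 < y → ∀ l ∈ Set.Icc l₀ l₁,
        max (Φ (l * y)) 0 ≤ a * max (Φ y) 0 + b * (y + 1))
    (hΦ0 : Tendsto Φ (nhdsWithin 0 (Set.Ioi 0)) (nhds (Φ 0)))
    (Q₀ Q₁ : Measure Ω)
    (hQ₀p : IsProbabilityMeasure Q₀) (hQ₁p : IsProbabilityMeasure Q₁)
    (hQ₀ : Q₀ ≪ P) (hQ₁ : Q₁ ≪ P)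
    (x : ℝ) (hx : x ∈ Set.Ioo (0 : ℝ) 1) :
    Integrable
        (fun ω => Φ (((ENNReal.ofReal x • Q₁ + ENNReal.ofReal (1 - x) • Q₀).rnDeriv P
          ω).toReal)) P ↔
      Integrable (fun ω => Φ ((Q₀.rnDeriv P ω).toReal)) P ∧
        Integrable (fun ω => Φ ((Q₁.rnDeriv P ω).toReal)) P := by
  obtain ⟨hx0, hx1⟩ := hx
  have hx1' : (0:ℝ) < 1 - x := by linarith
  have hIci : ConvexOn ℝ (Set.Ici 0) Φ := my_convexOn_Ici hΦconv hΦ0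
  obtain ⟨A, B, hA, hB, hlb⟩ := my_convex_lower_bound hIci
  have hcont : ContinuousOn Φ (Set.Ici 0) := my_contOn_Ici hΦconv hΦ0
  have hΨ : Continuous fun y : ℝ => Φ (max y 0) :=
    hcont.comp_continuous (continuous_id.max continuous_const)
      fun y => Set.mem_Ici.2 (le_max_right y 0)
  set f₀ : Ω → ℝ := fun ω => (Q₀.rnDeriv P ω).toReal with hf₀def
  set f₁ : Ω → ℝ := fun ω => (Q₁.rnDeriv P ω).toReal with hf₁def
  set g : Ω → ℝ := fun ω => x * f₁ ω + (1 - x) * f₀ ω with hgdef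
  have hf₀m : Measurable f₀ := (Measure.measurable_rnDeriv _ _).ennreal_toReal
  have hf₁m : Measurable f₁ := (Measure.measurable_rnDeriv _ _).ennreal_toReal
  have hgm : Measurable g := (hf₁m.const_mul x).add (hf₀m.const_mul (1 - x))
  have hf₀0 : ∀ ω, 0 ≤ f₀ ω := fun ω => ENNReal.toReal_nonneg
  have hf₁0 : ∀ ω, 0 ≤ f₁ ω := fun ω => ENNReal.toReal_nonneg
  have hg0 : ∀ ω, 0 ≤ g ω := fun ω =>
    add_nonneg (mul_nonneg hx0.le (hf₁0 ω)) (mul_nonneg hx1'.le (hf₀0 ω))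
  have hf₀i : Integrable f₀ P := Measure.integrable_toReal_rnDeriv
  have hf₁i : Integrable f₁ P := Measure.integrable_toReal_rnDeriv
  have hgi : Integrable g P := (hf₁i.const_mul x).add (hf₀i.const_mul (1 - x))
  have hASM : ∀ (h : Ω → ℝ), Measurable h → (∀ ω, 0 ≤ h ω) →
      AEStronglyMeasurable (fun ω => Φ (h ω)) P ∧
      AEStronglyMeasurable (fun ω => max (Φ (h ω)) 0) P := by
    intro h hm h0
    have e1 : (fun ω => Φ (h ω)) = fun ω => Φ (max (h ω) 0) := by
      funext ω; rw [max_eq_left (h0 ω)]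
    have e2 : (fun ω => max (Φ (h ω)) 0) = fun ω => max (Φ (max (h ω) 0)) 0 := by
      funext ω; rw [max_eq_left (h0 ω)]
    constructor
    · rw [e1]; exact (hΨ.measurable.comp hm).aestronglyMeasurable
    · rw [e2]; exact ((hΨ.max continuous_const).measurable.comp hm).aestronglyMeasurable
  have hiff : ∀ (h : Ω → ℝ), Measurable h → (∀ ω, 0 ≤ h ω) → Integrable h P →
      (Integrable (fun ω => Φ (h ω)) P ↔ Integrable (fun ω => max (Φ (h ω)) 0) P) :=
    fun h hm h0 hi => my_integrable_iff_pos_part hlb ((hASM h hm h0).1) h0 hi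
  -- identify the rnDeriv of the convex combination
  haveI hfin1 : IsFiniteMeasure (ENNReal.ofReal x • Q₁) := by
    constructor
    rw [Measure.smul_apply, smul_eq_mul, measure_univ, mul_one]
    exact ENNReal.ofReal_lt_top
  haveI hfin0 : IsFiniteMeasure (ENNReal.ofReal (1 - x) • Q₀) := by
    constructor
    rw [Measure.smul_apply, smul_eq_mul, measure_univ, mul_one]
    exact ENNReal.ofReal_lt_top
  have h_add := Measure.rnDeriv_add (ENNReal.ofReal x • Q₁) (ENNReal.ofReal (1 - x) • Q₀) P
  have h_s1 := Measure.rnDeriv_smul_left_of_ne_top Q₁ P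
    (r := ENNReal.ofReal x) ENNReal.ofReal_ne_top
  have h_s0 := Measure.rnDeriv_smul_left_of_ne_top Q₀ P
    (r := ENNReal.ofReal (1 - x)) ENNReal.ofReal_ne_top
  have h_lt1 := Measure.rnDeriv_lt_top Q₁ P
  have h_lt0 := Measure.rnDeriv_lt_top Q₀ P
  have hkey : ∀ᵐ ω ∂P,
      Φ (((ENNReal.ofReal x • Q₁ + ENNReal.ofReal (1 - x) • Q₀).rnDeriv P ω).toReal)
        = Φ (g ω) := by
    filter_upwards [h_add, h_s1, h_s0, h_lt1, h_lt0] with ω h1 h2 h3 h4 h5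
    have e1 : (ENNReal.ofReal x • Q₁).rnDeriv P ω = ENNReal.ofReal x * Q₁.rnDeriv P ω := by
      simpa [smul_eq_mul] using h2
    have e0 : (ENNReal.ofReal (1 - x) • Q₀).rnDeriv P ω
        = ENNReal.ofReal (1 - x) * Q₀.rnDeriv P ω := by
      simpa [smul_eq_mul] using h3
    have hne1 : ENNReal.ofReal x * Q₁.rnDeriv P ω ≠ ⊤ :=
      ENNReal.mul_ne_top ENNReal.ofReal_ne_top h4.ne
    have hne0 : ENNReal.ofReal (1 - x) * Q₀.rnDeriv P ω ≠ ⊤ :=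
      ENNReal.mul_ne_top ENNReal.ofReal_ne_top h5.ne
    congr 1
    rw [h1, Pi.add_apply, e1, e0, ENNReal.toReal_add hne1 hne0, ENNReal.toReal_mul,
      ENNReal.toReal_mul, ENNReal.toReal_ofReal hx0.le, ENNReal.toReal_ofReal hx1'.le]
  rw [integrable_congr hkey]
  have hinv1 : (1:ℝ) ≤ x⁻¹ := by
    nlinarith [mul_inv_cancel₀ hx0.ne', inv_pos.2 hx0,
      mul_nonneg (by linarith : (0:ℝ) ≤ 1 - x) (inv_pos.2 hx0).le]
  have hinv0 : (1:ℝ) ≤ (1 - x)⁻¹ := by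
    nlinarith [mul_inv_cancel₀ hx1'.ne', inv_pos.2 hx1',
      mul_nonneg (by linarith : (0:ℝ) ≤ x) (inv_pos.2 hx1').le]
  constructor
  · intro hQint
    have hgmax : Integrable (fun ω => max (Φ (g ω)) 0) P := (hiff g hgm hg0 hgi).1 hQint
    obtain ⟨a₁, ha₁, b₁, hb₁, hgr₁⟩ := hΦgrowth 1 x⁻¹ one_pos hinv1
    obtain ⟨a₀, ha₀, b₀, hb₀, hgr₀⟩ := hΦgrowth 1 (1 - x)⁻¹ one_pos hinv0
    have hfg₁ : ∀ ω, x * f₁ ω ≤ g ω := fun ω => by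
      have := mul_nonneg hx1'.le (hf₀0 ω); rw [hgdef]; dsimp only; linarith
    have hfg₀ : ∀ ω, (1 - x) * f₀ ω ≤ g ω := fun ω => by
      have := mul_nonneg hx0.le (hf₁0 ω); rw [hgdef]; dsimp only; linarith
    have hmax1 : Integrable (fun ω => max (Φ (f₁ ω)) 0) P :=
      my_pos_part_integrable hIci ha₁ hb₁ hx0 hgr₁ hf₁0 hfg₁
        ((hASM f₁ hf₁m hf₁0).2) hgi hgmax
    have hmax0 : Integrable (fun ω => max (Φ (f₀ ω)) 0) P :=
      my_pos_part_integrable hIci ha₀ hb₀ hx1' hgr₀ hf₀0 hfg₀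
        ((hASM f₀ hf₀m hf₀0).2) hgi hgmax
    exact ⟨(hiff f₀ hf₀m hf₀0 hf₀i).2 hmax0, (hiff f₁ hf₁m hf₁0 hf₁i).2 hmax1⟩
  · rintro ⟨h0int, h1int⟩
    have hmax0 : Integrable (fun ω => max (Φ (f₀ ω)) 0) P := (hiff f₀ hf₀m hf₀0 hf₀i).1 h0int
    have hmax1 : Integrable (fun ω => max (Φ (f₁ ω)) 0) P := (hiff f₁ hf₁m hf₁0 hf₁i).1 h1int
    have hbound : ∀ ω, max (Φ (g ω)) 0
        ≤ x * max (Φ (f₁ ω)) 0 + (1 - x) * max (Φ (f₀ ω)) 0 := by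
      intro ω
      have hnn : (0:ℝ) ≤ x * max (Φ (f₁ ω)) 0 + (1 - x) * max (Φ (f₀ ω)) 0 := by
        have := le_max_right (Φ (f₁ ω)) (0:ℝ)
        have := le_max_right (Φ (f₀ ω)) (0:ℝ)
        positivity
      refine max_le ?_ hnn
      have hcv : Φ (g ω) ≤ x * Φ (f₁ ω) + (1 - x) * Φ (f₀ ω) := by
        have := hIci.2 (Set.mem_Ici.2 (hf₁0 ω)) (Set.mem_Ici.2 (hf₀0 ω))
          hx0.le hx1'.le (by ring)
        simpa [smul_eq_mul, hgdef] using this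
      have h1 : x * Φ (f₁ ω) ≤ x * max (Φ (f₁ ω)) 0 :=
        mul_le_mul_of_nonneg_left (le_max_left _ _) hx0.le
      have h2 : (1 - x) * Φ (f₀ ω) ≤ (1 - x) * max (Φ (f₀ ω)) 0 :=
        mul_le_mul_of_nonneg_left (le_max_left _ _) hx1'.le
      linarith
    have hbi : Integrable (fun ω => x * max (Φ (f₁ ω)) 0 + (1 - x) * max (Φ (f₀ ω)) 0) P :=
      (hmax1.const_mul x).add (hmax0.const_mul (1 - x))
    have hgmax : Integrable (fun ω => max (Φ (g ω)) 0) P := by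
      refine Integrable.mono' hbi ((hASM g hgm hg0).2) ?_
      filter_upwards with ω
      rw [Real.norm_eq_abs, abs_of_nonneg (le_max_right (Φ (g ω)) 0)]
      exact hbound ω
    exact (hiff g hgm hg0 hgi).2 hgmax
end

section
/- Let (Ω, 𝓕, P) be a probability space, C ⊆ L^∞ a convex cone with −L^∞₊ ⊆ C, and Φ : (0,∞) → ℝ convex satisfying the growth condition G(Φ) with Φ(0) < +∞. If M_Φ is nonempty, then {z ∈ Lin(M_Φ) : E_P[z·g] ≤ 0 for all g ∈ C} = co(M_Φ); that is, the polar of C inside the linear span of the densities of M_Φ is exactly the convex cone generated by M_Φ. -/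
/-!
Every `z` in the span of the densities of `M_Φ` is dominated in absolute value by some `w ≥ 0`
with `w` and `Φ⁺(w)` integrable; such `w` form a convex cone, by convexity of `Φ` and `G(Φ)`.
Testing the polar inequality against `-1_A` shows `z ≥ 0`, so `z = l · dQ/dP` with
`l = E_P[z]` and `Q ∈ M₁`. Finally `Φ(dQ/dP)` is integrable since `0 ≤ dQ/dP ≤ w / l`, and on
`[0, w / l]` the convex function `Φ` lies between an affine minorant and `Φ⁺(0) + Φ⁺(w / l)`.
-/

open MeasureTheory Filter

variable {Ω : Type*} [MeasurableSpace Ω]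

/-- The set `M₁` of separating measures for the convex cone `C ⊆ L^∞` of bounded
super-replicable claims: probability measures `Q ≪ P` with `E_Q[g] ≤ 0` for all `g ∈ C`. -/
def sepMeasures (P : Measure Ω) (C : Set (Ω → ℝ)) : Set (Measure Ω) :=
  {Q | IsProbabilityMeasure Q ∧ Q ≪ P ∧ ∀ g ∈ C, ∫ ω, g ω ∂Q ≤ 0}

/-- The set `M_Φ` of separating measures with finite generalized entropy
`E_P[Φ(dQ/dP)] < ∞` (here `Φ(0) < +∞`, `Φ 0` being the limit of `Φ` at `0⁺`, so that
finiteness of the generalized entropy is plain integrability of `Φ(dQ/dP)`). -/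
def MPhi (P : Measure Ω) (C : Set (Ω → ℝ)) (Φ : ℝ → ℝ) : Set (Measure Ω) :=
  {Q ∈ sepMeasures P C | Integrable (fun ω => Φ ((Q.rnDeriv P ω).toReal)) P}

/-- The density `dQ/dP` as an element of `L⁰(P)` (an a.e.-equivalence class). -/
noncomputable def densAE (P Q : Measure Ω) : Ω →ₘ[P] ℝ :=
  MeasureTheory.AEEqFun.mk (fun ω => (Q.rnDeriv P ω).toReal)
    ((Measure.measurable_rnDeriv Q P).ennreal_toReal).aestronglyMeasurable

open Set Topology

section ConvexOnIci

variable {f : ℝ → ℝ} {a : ℝ}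

theorem ConvexOn.continuousOn_Ici_of_tendsto (hf : ConvexOn ℝ (Ioi a) f)
    (ha : Tendsto f (𝓝[>] a) (𝓝 (f a))) : ContinuousOn f (Ici a) := by
  intro x hx
  rcases (mem_Ici.1 hx).eq_or_lt with rfl | hax
  · exact continuousWithinAt_Ioi_iff_Ici.1 ha
  · exact ((hf.continuousOn isOpen_Ioi).continuousAt (Ioi_mem_nhds hax)).continuousWithinAt

theorem ConvexOn.convexOn_Ici (hf : ConvexOn ℝ (Ioi a) f) (hc : ContinuousOn f (Ici a)) :
    ConvexOn ℝ (Ici a) f := by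
  refine ⟨convex_Ici a, fun x hx y hy s t hs ht hst => ?_⟩
  -- Shift both points by `ε > 0` into `Ioi a` and let `ε → 0`.
  have shift : ∀ p ∈ Ici a, Tendsto (fun ε => f (p + ε)) (𝓝[>] 0) (𝓝 (f p)) := by
    intro p hp
    refine (hc p hp).tendsto.comp (tendsto_nhdsWithin_of_tendsto_nhds_of_eventually_within _
      ?_ ?_)
    · exact ((continuous_const.add continuous_id).tendsto' 0 p (add_zero p)).mono_left
        nhdsWithin_le_nhds
    · filter_upwards [self_mem_nhdsWithin] with ε (hε : 0 < ε)
      exact mem_Ici.2 (by linarith [mem_Ici.1 hp])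
  refine le_of_tendsto_of_tendsto (shift _ (convex_Ici a hx hy hs ht hst))
    (((shift x hx).const_mul s).add ((shift y hy).const_mul t)) ?_
  filter_upwards [self_mem_nhdsWithin] with ε (hε : 0 < ε)
  have hxy : s * (x + ε) + t * (y + ε) = s * x + t * y + ε := by linear_combination ε * hst
  have hxε : x + ε ∈ Ioi a := mem_Ioi.2 (by linarith [mem_Ici.1 hx])
  have hyε : y + ε ∈ Ioi a := mem_Ioi.2 (by linarith [mem_Ici.1 hy])
  simpa only [smul_eq_mul, hxy] using hf.2 hxε hyε hs ht hst

theorem ContinuousOn.comp_aestronglyMeasurable_of_mem_Ici (hf : ContinuousOn f (Ici a))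
    {μ : Measure Ω} {u : Ω → ℝ} (hu : AEStronglyMeasurable u μ) (hua : ∀ ω, a ≤ u ω) :
    AEStronglyMeasurable (fun ω => f (u ω)) μ := by
  have hfu : (fun ω => f (u ω)) = (fun x => f (max x a)) ∘ u := by
    ext ω
    simp [max_eq_left (hua ω)]
  rw [hfu]
  exact (hf.comp_continuous (continuous_id.max continuous_const)
    fun x => le_max_right x a).comp_aestronglyMeasurable hu

end ConvexOnIci

/-- The growth condition `G(Φ)`. -/
def GrowthCondition (Φ : ℝ → ℝ) : Prop :=
  ∀ l₀ l₁ : ℝ, 0 < l₀ → l₀ ≤ l₁ → ∃ a : ℝ, 0 < a ∧ ∃ b : ℝ, 0 < b ∧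
    ∀ y : ℝ, 0 < y → ∀ l ∈ Set.Icc l₀ l₁, max (Φ (l * y)) 0 ≤ a * max (Φ y) 0 + b * (y + 1)

theorem GrowthCondition.exists_posPart_mul_le {Φ : ℝ → ℝ} (hΦ : GrowthCondition Φ) {l : ℝ}
    (hl : 0 < l) : ∃ a b : ℝ, 0 ≤ a ∧ 0 ≤ b ∧ ∀ y, 0 ≤ y →
      max (Φ (l * y)) 0 ≤ max (Φ 0) 0 + a * max (Φ y) 0 + b * (y + 1) := by
  obtain ⟨a, ha, b, hb, h⟩ := hΦ l l hl le_rfl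
  refine ⟨a, b, ha.le, hb.le, fun y hy => ?_⟩
  have hrest : 0 ≤ a * max (Φ y) 0 + b * (y + 1) := by positivity
  rcases hy.eq_or_lt with rfl | hy
  · rw [mul_zero]
    linarith
  · linarith [h y hy l ⟨le_rfl, le_rfl⟩, le_max_right (Φ 0) 0]

def phiPosCone (P : Measure Ω) (Φ : ℝ → ℝ) : Set (Ω → ℝ) :=
  {w | (∀ ω, 0 ≤ w ω) ∧ Integrable w P ∧ Integrable (fun ω => max (Φ (w ω)) 0) P}

section PhiPosCone

variable {P : Measure Ω} {Φ : ℝ → ℝ}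

theorem zero_mem_phiPosCone [IsFiniteMeasure P] : (0 : Ω → ℝ) ∈ phiPosCone P Φ :=
  ⟨fun _ => le_rfl, integrable_zero _ _ _, integrable_const (max (Φ 0) 0)⟩

theorem smul_mem_phiPosCone [IsFiniteMeasure P] (hcont : ContinuousOn Φ (Ici 0))
    (hgrowth : GrowthCondition Φ) {c : ℝ} (hc : 0 ≤ c) {w : Ω → ℝ} (hw : w ∈ phiPosCone P Φ) :
    c • w ∈ phiPosCone P Φ := by
  rcases hc.eq_or_lt with rfl | hc
  · rw [zero_smul]
    exact zero_mem_phiPosCone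
  obtain ⟨hw0, hwi, hΦw⟩ := hw
  obtain ⟨a, b, -, -, hab⟩ := hgrowth.exists_posPart_mul_le hc
  have hbound : Integrable (fun ω => max (Φ 0) 0 + a * max (Φ (w ω)) 0 + b * (w ω + 1)) P :=
    ((integrable_const _).add (hΦw.const_mul a)).add ((hwi.add (integrable_const 1)).const_mul b)
  refine ⟨fun ω => mul_nonneg hc.le (hw0 ω), hwi.smul c, ?_⟩
  refine hbound.mono'
    ((hcont.sup continuousOn_const).comp_aestronglyMeasurable_of_mem_Ici
      (hwi.1.const_smul c) fun ω => mul_nonneg hc.le (hw0 ω)) (ae_of_all _ fun ω => ?_)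
  rw [Real.norm_of_nonneg (le_max_right _ _)]
  exact hab (w ω) (hw0 ω)

theorem smul_add_smul_mem_phiPosCone (hconv : ConvexOn ℝ (Ici 0) Φ)
    (hcont : ContinuousOn Φ (Ici 0)) {s t : ℝ} (hs : 0 ≤ s) (ht : 0 ≤ t) (hst : s + t = 1)
    {v w : Ω → ℝ} (hv : v ∈ phiPosCone P Φ) (hw : w ∈ phiPosCone P Φ) :
    s • v + t • w ∈ phiPosCone P Φ := by
  obtain ⟨hv0, hvi, hΦv⟩ := hv
  obtain ⟨hw0, hwi, hΦw⟩ := hw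
  have hpos : ConvexOn ℝ (Ici 0) fun x => max (Φ x) 0 :=
    hconv.sup (convexOn_const 0 (convex_Ici 0))
  have hsum0 : ∀ ω, 0 ≤ (s • v + t • w) ω := fun ω => by
    simp only [Pi.add_apply, Pi.smul_apply, smul_eq_mul]
    exact add_nonneg (mul_nonneg hs (hv0 ω)) (mul_nonneg ht (hw0 ω))
  refine ⟨hsum0, (hvi.smul s).add (hwi.smul t), ?_⟩
  refine Integrable.mono' ((hΦv.const_mul s).add (hΦw.const_mul t))
    ((hcont.sup continuousOn_const).comp_aestronglyMeasurable_of_mem_Ici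
      ((hvi.smul s).add (hwi.smul t)).1 hsum0) (ae_of_all _ fun ω => ?_)
  rw [Real.norm_of_nonneg (le_max_right _ _)]
  exact hpos.2 (mem_Ici.2 (hv0 ω)) (mem_Ici.2 (hw0 ω)) hs ht hst

theorem add_mem_phiPosCone [IsFiniteMeasure P] (hconv : ConvexOn ℝ (Ici 0) Φ)
    (hcont : ContinuousOn Φ (Ici 0)) (hgrowth : GrowthCondition Φ) {v w : Ω → ℝ}
    (hv : v ∈ phiPosCone P Φ) (hw : w ∈ phiPosCone P Φ) : v + w ∈ phiPosCone P Φ := by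
  have hvw : v + w = (2 : ℝ) • ((1 / 2 : ℝ) • v + (1 / 2 : ℝ) • w) := by
    ext ω
    simp only [Pi.add_apply, Pi.smul_apply, smul_eq_mul]
    ring
  rw [hvw]
  exact smul_mem_phiPosCone hcont hgrowth two_pos.le
    (smul_add_smul_mem_phiPosCone hconv hcont (by norm_num) (by norm_num) (by norm_num) hv hw)

/-- On `[0, w]`, `Φ` lies between an affine minorant and `max (Φ 0) (Φ w)`. -/
theorem integrable_comp_of_le_mem_phiPosCone [IsFiniteMeasure P]
    (hconv : ConvexOn ℝ (Ici 0) Φ) (hcont : ContinuousOn Φ (Ici 0)) {u w : Ω → ℝ}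
    (hu : AEStronglyMeasurable u P) (hu0 : ∀ ω, 0 ≤ u ω) (huw : u ≤ᵐ[P] w)
    (hw : w ∈ phiPosCone P Φ) : Integrable (fun ω => Φ (u ω)) P := by
  obtain ⟨hw0, hwi, hΦw⟩ := hw
  obtain ⟨m, c, hmc⟩ := hconv.exists_affine_le_real isClosed_Ici hcont.lowerSemicontinuousOn
  refine Integrable.mono' ((((integrable_const (max (Φ 0) 0)).add hΦw).add
      (hwi.const_mul |m|)).add (integrable_const |c|))
    (hcont.comp_aestronglyMeasurable_of_mem_Ici hu hu0) ?_
  filter_upwards [huw] with ω huwω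
  have hupper : Φ (u ω) ≤ max (Φ 0) (Φ (w ω)) :=
    hconv.le_on_segment (mem_Ici.2 le_rfl) (mem_Ici.2 (hw0 ω))
      (by rw [segment_eq_Icc (hw0 ω)]; exact ⟨hu0 ω, huwω⟩)
  have hlower : m * u ω + c ≤ Φ (u ω) := hmc (u ω) (hu0 ω)
  have hmu : |m| * u ω ≤ |m| * w ω := mul_le_mul_of_nonneg_left huwω (abs_nonneg m)
  have hmu' : -|m| * u ω ≤ m * u ω := mul_le_mul_of_nonneg_right (neg_abs_le m) (hu0 ω)
  simp only [Pi.add_apply, Real.norm_eq_abs, abs_le]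
  constructor
  · linarith [neg_abs_le c, le_max_right (Φ 0) 0, le_max_right (Φ (w ω)) 0]
  · linarith [max_le_max (le_max_left (Φ 0) 0) (le_max_left (Φ (w ω)) 0),
      max_le_add_of_nonneg (le_max_right (Φ 0) 0) (le_max_right (Φ (w ω)) 0),
      mul_nonneg (abs_nonneg m) (hw0 ω), abs_nonneg c]

end PhiPosCone

theorem MeasureTheory.AEEqFun.exists_abs_le_of_mem_span {P : Measure Ω} {K : Set (Ω → ℝ)}
    (hK0 : 0 ∈ K) (hKadd : ∀ v ∈ K, ∀ w ∈ K, v + w ∈ K)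
    (hKsmul : ∀ c : ℝ, 0 ≤ c → ∀ w ∈ K, c • w ∈ K)
    {s : Set (Ω →ₘ[P] ℝ)} (hs : ∀ v ∈ s, ∃ w ∈ K, ∀ᵐ ω ∂P, |v ω| ≤ w ω)
    {z : Ω →ₘ[P] ℝ} (hz : z ∈ Submodule.span ℝ s) : ∃ w ∈ K, ∀ᵐ ω ∂P, |z ω| ≤ w ω := by
  induction hz using Submodule.span_induction with
  | mem v hv => exact hs v hv
  | zero =>
    refine ⟨0, hK0, ?_⟩
    filter_upwards [AEEqFun.coeFn_zero (μ := P) (β := ℝ)] with ω h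
    simp [h]
  | add x y _ _ hx hy =>
    obtain ⟨v, hv, hxv⟩ := hx
    obtain ⟨w, hw, hyw⟩ := hy
    refine ⟨v + w, hKadd v hv w hw, ?_⟩
    filter_upwards [AEEqFun.coeFn_add x y, hxv, hyw] with ω h hx hy
    rw [h, Pi.add_apply, Pi.add_apply]
    exact (abs_add_le _ _).trans (add_le_add hx hy)
  | smul c x _ hx =>
    obtain ⟨w, hw, hxw⟩ := hx
    refine ⟨|c| • w, hKsmul |c| (abs_nonneg c) w hw, ?_⟩
    filter_upwards [AEEqFun.coeFn_smul c x, hxw] with ω h hx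
    rw [h, Pi.smul_apply, Pi.smul_apply, smul_eq_mul, smul_eq_mul, abs_mul]
    exact mul_le_mul_of_nonneg_left hx (abs_nonneg c)

theorem ae_nonneg_of_forall_integral_mul_nonpos {P : Measure Ω} {z : Ω → ℝ}
    (hz : Integrable z P)
    (h : ∀ g : Ω → ℝ, MemLp g ⊤ P → (∀ᵐ ω ∂P, g ω ≤ 0) → ∫ ω, z ω * g ω ∂P ≤ 0) :
    0 ≤ᵐ[P] z := by
  refine ae_nonneg_of_forall_setIntegral_nonneg hz fun s hs _ => ?_
  have hg : MemLp (-s.indicator fun _ => (1 : ℝ)) ⊤ P :=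
    ((memLp_top_const (1 : ℝ)).indicator hs).neg
  have hg0 : ∀ᵐ ω ∂P, (-s.indicator (fun _ => (1 : ℝ))) ω ≤ 0 :=
    ae_of_all _ fun ω => neg_nonpos.2 (indicator_nonneg (fun _ _ => zero_le_one) ω)
  have hzg : (fun ω => z ω * (-s.indicator (fun _ => (1 : ℝ))) ω) = fun ω => -s.indicator z ω := by
    ext ω
    by_cases hω : ω ∈ s <;> simp [hω]
  have hsz := h _ hg hg0
  rw [hzg, integral_neg, integral_indicator hs] at hsz
  linarith

section Densities

variable {P Q : Measure Ω}

theorem coeFn_densAE (P Q : Measure Ω) :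
    ⇑(densAE P Q) =ᵐ[P] fun ω => (Q.rnDeriv P ω).toReal :=
  AEEqFun.coeFn_mk _ _

theorem integral_smul_densAE_mul [SigmaFinite P] [SigmaFinite Q] (hQP : Q ≪ P) (l : ℝ) (g : Ω → ℝ) :
    ∫ ω, (l • densAE P Q) ω * g ω ∂P = l * ∫ ω, g ω ∂Q := by
  rw [← integral_toReal_rnDeriv_mul hQP, ← integral_const_mul]
  refine integral_congr_ae ?_
  filter_upwards [AEEqFun.coeFn_smul l (densAE P Q), coeFn_densAE P Q] with ω h hd
  rw [h, Pi.smul_apply, hd, smul_eq_mul, mul_assoc]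

theorem rnDeriv_toReal_mem_phiPosCone {C : Set (Ω → ℝ)} {Φ : ℝ → ℝ} (hQ : Q ∈ MPhi P C Φ) :
    (fun ω => (Q.rnDeriv P ω).toReal) ∈ phiPosCone P Φ :=
  haveI := hQ.1.1
  ⟨fun _ => ENNReal.toReal_nonneg, Measure.integrable_toReal_rnDeriv, hQ.2.pos_part⟩

/-- The measure is `(z / l) • P`. -/
theorem exists_isProbabilityMeasure_eq_smul_densAE [SigmaFinite P] {z : Ω →ₘ[P] ℝ}
    (hz0 : 0 ≤ᵐ[P] z) (hzi : Integrable z P) (hl : 0 < ∫ ω, z ω ∂P) :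
    ∃ Q : Measure Ω, IsProbabilityMeasure Q ∧ Q ≪ P ∧ z = (∫ ω, z ω ∂P) • densAE P Q := by
  set l := ∫ ω, z ω ∂P
  set u : Ω → ℝ := fun ω => l⁻¹ * z ω
  have hu0 : 0 ≤ᵐ[P] u := by
    filter_upwards [hz0] with ω h
    exact mul_nonneg (inv_nonneg.2 hl.le) h
  have hui : Integrable u P := hzi.const_mul _
  set Q := P.withDensity fun ω => ENNReal.ofReal (u ω)
  have hum : Measurable fun ω => ENNReal.ofReal (u ω) :=
    (measurable_const.mul z.stronglyMeasurable.measurable).ennreal_ofReal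
  have hdens : ∀ᵐ ω ∂P, (Q.rnDeriv P ω).toReal = u ω := by
    filter_upwards [Measure.rnDeriv_withDensity P hum, hu0] with ω h h0
    rw [h, ENNReal.toReal_ofReal h0]
  have hprob : IsProbabilityMeasure Q := by
    constructor
    rw [withDensity_apply _ MeasurableSet.univ, Measure.restrict_univ,
      ← ofReal_integral_eq_lintegral_ofReal hui hu0, integral_const_mul, inv_mul_cancel₀ hl.ne',
      ENNReal.ofReal_one]
  refine ⟨Q, hprob, withDensity_absolutelyContinuous _ _, AEEqFun.ext ?_⟩
  filter_upwards [AEEqFun.coeFn_smul l (densAE P Q), coeFn_densAE P Q, hdens] with ω h hd hu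
  rw [h, Pi.smul_apply, hd, hu, smul_eq_mul, ← mul_assoc, mul_inv_cancel₀ hl.ne', one_mul]

end Densities

section MPhi

variable {P : Measure Ω} [IsFiniteMeasure P] {C : Set (Ω → ℝ)} {Φ : ℝ → ℝ}

theorem exists_abs_le_mem_phiPosCone_of_mem_span (hconv : ConvexOn ℝ (Ici 0) Φ)
    (hcont : ContinuousOn Φ (Ici 0)) (hgrowth : GrowthCondition Φ) {z : Ω →ₘ[P] ℝ}
    (hz : z ∈ Submodule.span ℝ (densAE P '' MPhi P C Φ)) :
    ∃ w ∈ phiPosCone P Φ, ∀ᵐ ω ∂P, |z ω| ≤ w ω := by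
  refine AEEqFun.exists_abs_le_of_mem_span zero_mem_phiPosCone
    (fun _ hv _ hw => add_mem_phiPosCone hconv hcont hgrowth hv hw)
    (fun _ hc _ hw => smul_mem_phiPosCone hcont hgrowth hc hw) ?_ hz
  rintro _ ⟨Q, hQ, rfl⟩
  refine ⟨_, rnDeriv_toReal_mem_phiPosCone hQ, ?_⟩
  filter_upwards [coeFn_densAE P Q] with ω h
  rw [h, abs_of_nonneg ENNReal.toReal_nonneg]

theorem mem_MPhi_of_eq_smul_densAE (hconv : ConvexOn ℝ (Ici 0) Φ)
    (hcont : ContinuousOn Φ (Ici 0)) (hgrowth : GrowthCondition Φ) {Q : Measure Ω}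
    (hQ : IsProbabilityMeasure Q) (hQP : Q ≪ P)
    {l : ℝ} (hl : 0 < l) {z : Ω →ₘ[P] ℝ} (hzQ : z = l • densAE P Q) {w : Ω → ℝ}
    (hw : w ∈ phiPosCone P Φ) (hzw : ∀ᵐ ω ∂P, |z ω| ≤ w ω)
    (hpolar : ∀ g ∈ C, ∫ ω, z ω * g ω ∂P ≤ 0) : Q ∈ MPhi P C Φ := by
  subst hzQ
  refine ⟨⟨hQ, hQP, fun g hg => ?_⟩, ?_⟩
  · have hlg := hpolar g hg
    rw [integral_smul_densAE_mul hQP] at hlg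
    exact nonpos_of_mul_nonpos_right hlg hl
  refine integrable_comp_of_le_mem_phiPosCone hconv hcont
    (Measure.measurable_rnDeriv Q P).ennreal_toReal.aestronglyMeasurable
    (fun _ => ENNReal.toReal_nonneg) ?_ (smul_mem_phiPosCone hcont hgrowth (inv_nonneg.2 hl.le) hw)
  filter_upwards [AEEqFun.coeFn_smul l (densAE P Q), coeFn_densAE P Q, hzw] with ω hs hd hω
  rw [hs, Pi.smul_apply, hd, smul_eq_mul] at hω
  rw [Pi.smul_apply, smul_eq_mul, le_inv_mul_iff₀ hl]
  exact (le_abs_self _).trans hω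

end MPhi

theorem polar_of_C_eq_cone_of_MPhi_general
    (P : Measure Ω) [IsProbabilityMeasure P]
    (C : Set (Ω → ℝ))
    (hCneg : ∀ f : Ω → ℝ, MemLp f ⊤ P → (∀ᵐ ω ∂P, f ω ≤ 0) → f ∈ C)
    (Φ : ℝ → ℝ)
    (hΦconv : ConvexOn ℝ (Set.Ioi 0) Φ)
    (hΦgrowth : ∀ l₀ l₁ : ℝ, 0 < l₀ → l₀ ≤ l₁ → ∃ a : ℝ, 0 < a ∧ ∃ b : ℝ, 0 < b ∧
      ∀ y : ℝ, 0 < y → ∀ l ∈ Set.Icc l₀ l₁,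
        max (Φ (l * y)) 0 ≤ a * max (Φ y) 0 + b * (y + 1))
    (hΦ0 : Tendsto Φ (nhdsWithin 0 (Set.Ioi 0)) (nhds (Φ 0)))
    (hMPhi : (MPhi P C Φ).Nonempty) :
    {z : Ω →ₘ[P] ℝ | z ∈ Submodule.span ℝ (densAE P '' MPhi P C Φ) ∧
        ∀ g ∈ C, ∫ ω, z ω * g ω ∂P ≤ 0} =
      {z : Ω →ₘ[P] ℝ | ∃ l : ℝ, 0 ≤ l ∧ ∃ Q ∈ MPhi P C Φ, z = l • densAE P Q} := by
  have hcont := hΦconv.continuousOn_Ici_of_tendsto hΦ0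
  have hconv := hΦconv.convexOn_Ici hcont
  ext z
  constructor
  · rintro ⟨hspan, hpolar⟩
    obtain ⟨w, hw, hzw⟩ := exists_abs_le_mem_phiPosCone_of_mem_span hconv hcont hΦgrowth hspan
    have hzi : Integrable z P := hw.2.1.mono' z.aestronglyMeasurable hzw
    have hz0 : 0 ≤ᵐ[P] z := ae_nonneg_of_forall_integral_mul_nonpos hzi
      fun g hg hg0 => hpolar g (hCneg g hg hg0)
    rcases (integral_nonneg_of_ae hz0).eq_or_lt with hl | hl
    · obtain ⟨Q₀, hQ₀⟩ := hMPhi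
      refine ⟨0, le_rfl, Q₀, hQ₀, ?_⟩
      rw [zero_smul]
      exact AEEqFun.ext (((integral_eq_zero_iff_of_nonneg_ae hz0 hzi).1 hl.symm).trans
        AEEqFun.coeFn_zero.symm)
    · obtain ⟨Q, hQ, hQP, hzQ⟩ := exists_isProbabilityMeasure_eq_smul_densAE hz0 hzi hl
      exact ⟨_, hl.le, Q,
        mem_MPhi_of_eq_smul_densAE hconv hcont hΦgrowth hQ hQP hl hzQ hw hzw hpolar, hzQ⟩
  · rintro ⟨l, hl, Q, hQ, rfl⟩
    refine ⟨Submodule.smul_mem _ _ (Submodule.subset_span ⟨Q, hQ, rfl⟩), fun g hg => ?_⟩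
    have := hQ.1.1
    rw [integral_smul_densAE_mul hQ.1.2.1]
    exact mul_nonpos_of_nonneg_of_nonpos hl (hQ.1.2.2 g hg)

/-- Proposition 19 of Biagini–Frittelli: if `Φ(0) < +∞` and `M_Φ ≠ ∅`, then the polar of
`C` inside `Lin(M_Φ)` (the linear span of the densities of `M_Φ` in `L¹(P)`) is exactly
the convex cone `co(M_Φ)` generated by the densities of `M_Φ`. -/
theorem polar_of_C_eq_cone_of_MPhi
    (P : Measure Ω) [IsProbabilityMeasure P]
    (C : Set (Ω → ℝ))
    (hCbdd : ∀ g ∈ C, MemLp g ⊤ P)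
    (hCcone : ∀ f ∈ C, ∀ g ∈ C, ∀ a b : ℝ, 0 ≤ a → 0 ≤ b →
      (fun ω => a * f ω + b * g ω) ∈ C)
    (hCneg : ∀ f : Ω → ℝ, MemLp f ⊤ P → (∀ᵐ ω ∂P, f ω ≤ 0) → f ∈ C)
    (Φ : ℝ → ℝ)
    (hΦconv : ConvexOn ℝ (Set.Ioi 0) Φ)
    (hΦgrowth : ∀ l₀ l₁ : ℝ, 0 < l₀ → l₀ ≤ l₁ → ∃ a : ℝ, 0 < a ∧ ∃ b : ℝ, 0 < b ∧
      ∀ y : ℝ, 0 < y → ∀ l ∈ Set.Icc l₀ l₁,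
        max (Φ (l * y)) 0 ≤ a * max (Φ y) 0 + b * (y + 1))
    (hΦ0 : Tendsto Φ (nhdsWithin 0 (Set.Ioi 0)) (nhds (Φ 0)))
    (hMPhi : (MPhi P C Φ).Nonempty) :
    {z : Ω →ₘ[P] ℝ | z ∈ Submodule.span ℝ (densAE P '' MPhi P C Φ) ∧
        ∀ g ∈ C, ∫ ω, z ω * g ω ∂P ≤ 0} =
      {z : Ω →ₘ[P] ℝ | ∃ l : ℝ, 0 ≤ l ∧ ∃ Q ∈ MPhi P C Φ, z = l • densAE P Q} :=
  polar_of_C_eq_cone_of_MPhi_general P C hCneg Φ hΦconv hΦgrowth hΦ0 hMPhi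
end

section
/- Let (Ω, 𝓕, P) be a probability space and C ⊆ L^∞ a convex cone with −L^∞₊ ⊆ C. Assume M₁ ∩ ℙ ≠ ∅ and let f be a random variable with f ∈ L¹(Q) for every Q ∈ M₁. Then inf{x ∈ ℝ : f − x lies in the L¹(Q)-norm closure of C for every Q ∈ M₁} = sup{E_Q[f] : Q ∈ M₁} (equality in ℝ ∪ {+∞}). -/
open MeasureTheory

variable {Ω : Type*} [MeasurableSpace Ω]

/-- `C_id`: the random variables lying, for every `Q ∈ M₁`, in the `L¹(Q)`-norm closure
of `C` (the case `Φ = id` of `C_Φ`, for which `M_Φ = M₁`). -/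
def Cid (P : Measure Ω) (C : Set (Ω → ℝ)) : Set (Ω → ℝ) :=
  {f | ∀ Q ∈ sepMeasures P C, Integrable f Q ∧
    ∀ ε : ℝ, 0 < ε → ∃ g ∈ C, ∫ ω, |f ω - g ω| ∂Q < ε}

/-! If `E_Q[f] ≤ x` for every `Q ∈ M₁` but `f - x` is not in the `L¹(Q)`-closure of `C` for
some `Q ∈ M₁`, Hahn–Banach separates `f - x` from that closed cone by a functional on `L¹(Q)`,
i.e. by a density in `L^∞(Q)`: the Riesz representative of the functional on `L²(Q) ⊆ L¹(Q)`,
bounded by its norm as one sees on indicators. As `-1_A ∈ C` for every event `A`, the density is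
nonnegative, and once normalised it is the density of some `Q' ∈ M₁` with `E_{Q'}[f] > x`.
Conversely, if `f - x` is `L¹(Q)`-approximated by `g ∈ C`, then `E_Q[f] - x ≤ E_Q[g] + ε ≤ ε`. -/

open scoped ENNReal

namespace MeasureTheory

variable {μ : Measure Ω}

theorem MemLp.integrable_of_absolutelyContinuous {ν : Measure Ω} [IsFiniteMeasure ν]
    {g : Ω → ℝ} (hg : MemLp g ∞ μ) (hνμ : ν ≪ μ) : Integrable g ν :=
  MemLp.integrable le_top
    ⟨hg.1.mono_ac hνμ, (eLpNormEssSup_mono_measure g hνμ).trans_lt hg.2⟩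

theorem integral_withDensity_ofReal {k : Ω → ℝ} (hk : AEMeasurable k μ) (hk0 : 0 ≤ᵐ[μ] k)
    (φ : Ω → ℝ) :
    ∫ ω, φ ω ∂μ.withDensity (fun ω => ENNReal.ofReal (k ω)) = ∫ ω, k ω * φ ω ∂μ := by
  rw [integral_withDensity_eq_integral_toReal_smul₀ hk.ennreal_ofReal
    (.of_forall fun _ => ENNReal.ofReal_lt_top)]
  refine integral_congr_ae ?_
  filter_upwards [hk0] with ω hω
  rw [ENNReal.toReal_ofReal hω, smul_eq_mul]

theorem isProbabilityMeasure_withDensity_ofReal {k : Ω → ℝ} (hk : Integrable k μ)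
    (hk0 : 0 ≤ᵐ[μ] k) (hk1 : ∫ ω, k ω ∂μ = 1) :
    IsProbabilityMeasure (μ.withDensity fun ω => ENNReal.ofReal (k ω)) := by
  constructor
  rw [withDensity_apply _ MeasurableSet.univ, Measure.restrict_univ,
    ← ofReal_integral_eq_lintegral_ofReal hk hk0, hk1, ENNReal.ofReal_one]

theorem lpPairing_mul_toL1 (h : Lp ℝ ∞ μ) {g : Ω → ℝ} (hg : Integrable g μ) :
    (ContinuousLinearMap.mul ℝ ℝ).lpPairing μ ∞ 1 h (hg.toL1 g) = ∫ ω, h ω * g ω ∂μ := by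
  rw [ContinuousLinearMap.lpPairing_eq_integral]
  refine integral_congr_ae ?_
  filter_upwards [hg.coeFn_toL1] with ω hω
  rw [ContinuousLinearMap.mul_apply', hω]

variable [IsFiniteMeasure μ]

theorem exists_integrable_setIntegral_eq_indicatorConstLp (Λ : StrongDual ℝ (Lp ℝ 1 μ)) :
    ∃ h : Ω → ℝ, Integrable h μ ∧ ∀ s (hs : MeasurableSet s) (c : ℝ),
      ∫ x in s, c * h x ∂μ = Λ (indicatorConstLp 1 hs (measure_ne_top μ s) c) := by
  -- the inclusion `L² ⊆ L¹`, as Hölder multiplication by `1 ∈ L²`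
  let ι : Lp ℝ 2 μ →L[ℝ] Lp ℝ 1 μ :=
    (ContinuousLinearMap.mul ℝ ℝ).holderL μ 2 2 1 (Lp.const 2 μ 1)
  let h := (InnerProductSpace.toDual ℝ (Lp ℝ 2 μ)).symm (Λ ∘L ι)
  refine ⟨h, (Lp.memLp h).integrable one_le_two, fun s hs c => ?_⟩
  have hι : ι (indicatorConstLp 2 hs (measure_ne_top μ s) c) =
      indicatorConstLp 1 hs (measure_ne_top μ s) c := by
    refine Lp.ext ?_
    filter_upwards [(ContinuousLinearMap.mul ℝ ℝ).coeFn_holder (r := 1) (Lp.const 2 μ (1 : ℝ))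
        (indicatorConstLp 2 hs (measure_ne_top μ s) c), Lp.coeFn_const 2 μ (1 : ℝ),
      indicatorConstLp_coeFn (p := 2) (hs := hs) (hμs := measure_ne_top μ s) (c := c),
      indicatorConstLp_coeFn (p := 1) (hs := hs) (hμs := measure_ne_top μ s) (c := c)]
      with x h1 h2 h3 h4
    change (ContinuousLinearMap.mul ℝ ℝ).holder 1 (Lp.const 2 μ (1 : ℝ)) _ x = _
    rw [h1, h2, h3, h4]
    simp
  rw [← hι, ← ContinuousLinearMap.comp_apply, ← InnerProductSpace.toDual_symm_apply,
    real_inner_comm, L2.inner_indicatorConstLp_eq_setIntegral_inner]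
  simp only [RCLike.inner_apply', conj_trivial]
  rfl

theorem ae_abs_le_opNorm_of_setIntegral_eq (Λ : StrongDual ℝ (Lp ℝ 1 μ)) {h : Ω → ℝ}
    (hh : Integrable h μ) (hΛ : ∀ s (hs : MeasurableSet s),
      ∫ x in s, h x ∂μ = Λ (indicatorConstLp 1 hs (measure_ne_top μ s) 1)) :
    ∀ᵐ x ∂μ, |h x| ≤ ‖Λ‖ := by
  have hset : ∀ s, MeasurableSet s → |∫ x in s, h x ∂μ| ≤ ∫ x in s, ‖Λ‖ ∂μ := by
    intro s hs
    calc |∫ x in s, h x ∂μ| ≤ ‖Λ‖ * ‖indicatorConstLp 1 hs (measure_ne_top μ s) (1 : ℝ)‖ := by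
          rw [hΛ s hs]; exact Λ.le_opNorm _
      _ = ∫ x in s, ‖Λ‖ ∂μ := by
          rw [norm_indicatorConstLp one_ne_zero ENNReal.one_ne_top, setIntegral_const]
          simp [mul_comm]
  have hle := ae_le_of_forall_setIntegral_le hh (integrable_const ‖Λ‖)
    fun s hs _ => (le_abs_self _).trans (hset s hs)
  have hge := ae_le_of_forall_setIntegral_le hh.neg (integrable_const ‖Λ‖)
    fun s hs _ => by
      rw [integral_congr_ae (.of_forall fun x => Pi.neg_apply h x), integral_neg]
      exact (neg_le_abs _).trans (hset s hs)
  filter_upwards [hle, hge] with x h1 h2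
  exact abs_le.2 ⟨by simpa using neg_le.1 h2, h1⟩

theorem exists_lpPairing_eq (Λ : StrongDual ℝ (Lp ℝ 1 μ)) :
    ∃ h : Lp ℝ ∞ μ, (ContinuousLinearMap.mul ℝ ℝ).lpPairing μ ∞ 1 h = Λ := by
  obtain ⟨h, hh, hΛ⟩ := exists_integrable_setIntegral_eq_indicatorConstLp Λ
  have hbdd := ae_abs_le_opNorm_of_setIntegral_eq Λ hh fun s hs => by
    simpa using hΛ s hs 1
  have hh_top : MemLp h ∞ μ := memLp_top_of_bound hh.aestronglyMeasurable ‖Λ‖ hbdd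
  refine ⟨hh_top.toLp h, ContinuousLinearMap.ext fun F => ?_⟩
  induction F using Lp.induction ENNReal.one_ne_top with
  | @indicatorConst c s hs hμs =>
    rw [Lp.simpleFunc.coe_indicatorConst, ← hΛ, ContinuousLinearMap.lpPairing_eq_integral,
      ← integral_indicator hs]
    refine integral_congr_ae ?_
    filter_upwards [hh_top.coeFn_toLp,
      indicatorConstLp_coeFn (p := 1) (hs := hs) (hμs := hμs.ne) (c := c)] with x h1 h2
    by_cases hx : x ∈ s <;> simp [h1, h2, hx, mul_comm]
  | add hf hg _ hf' hg' => rw [map_add, map_add, hf', hg']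
  | isClosed => exact isClosed_eq (ContinuousLinearMap.continuous _) Λ.continuous

end MeasureTheory

section SeparatingMeasures

variable {P Q : Measure Ω} {C : Set (Ω → ℝ)}

theorem integral_le_of_sub_mem_Cid (hCbdd : ∀ g ∈ C, MemLp g ∞ P) {f : Ω → ℝ} {x : ℝ}
    (hfx : (fun ω => f ω - x) ∈ Cid P C) (hQ : Q ∈ sepMeasures P C) : ∫ ω, f ω ∂Q ≤ x := by
  obtain ⟨hQprob, hQP, hQC⟩ := hQ
  obtain ⟨hF, happrox⟩ := hfx Q ⟨hQprob, hQP, hQC⟩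
  have hf : Integrable f Q :=
    (hF.add (integrable_const x)).congr (.of_forall fun ω => sub_add_cancel (f ω) x)
  refine le_of_forall_pos_le_add fun ε hε => ?_
  obtain ⟨g, hgC, hgε⟩ := happrox ε hε
  have hg := (hCbdd g hgC).integrable_of_absolutelyContinuous hQP
  have hFg : ∫ ω, (f ω - x - g ω) ∂Q ≤ ∫ ω, |f ω - x - g ω| ∂Q :=
    integral_mono (hF.sub hg) (hF.sub hg).abs fun ω => le_abs_self _
  rw [integral_sub hF hg, integral_sub hf (integrable_const x), integral_const] at hFg
  simp only [probReal_univ, smul_eq_mul, one_mul] at hFg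
  linarith [hQC g hgC]

theorem ae_nonneg_of_forall_integral_mul_nonpos_s11
    (hCneg : ∀ f : Ω → ℝ, MemLp f ∞ P → (∀ᵐ ω ∂P, f ω ≤ 0) → f ∈ C) {k : Ω → ℝ}
    (hk : Integrable k Q) (hkC : ∀ g ∈ C, ∫ ω, k ω * g ω ∂Q ≤ 0) : 0 ≤ᵐ[Q] k := by
  refine ae_nonneg_of_forall_setIntegral_nonneg hk fun s hs _ => ?_
  have hχ : MemLp (s.indicator fun _ => (1 : ℝ)) ∞ P :=
    memLp_top_of_bound (aestronglyMeasurable_const.indicator hs) 1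
      (.of_forall fun ω => by by_cases hω : ω ∈ s <;> simp [hω])
  have hkχ := hkC _ (hCneg _ hχ.neg (.of_forall fun ω => by by_cases hω : ω ∈ s <;> simp [hω]))
  have hkχ_eq : (fun ω => k ω * (-s.indicator (fun _ => (1 : ℝ))) ω) =
      fun ω => -s.indicator k ω := by
    ext ω; by_cases hω : ω ∈ s <;> simp [hω]
  rw [hkχ_eq, integral_neg, integral_indicator hs] at hkχ
  linarith

/-- `k / ∫ k` is the density with respect to `Q` of a measure in `M₁`. -/
theorem integral_mul_nonpos_of_forall_integral_nonpos
    (hCneg : ∀ f : Ω → ℝ, MemLp f ∞ P → (∀ᵐ ω ∂P, f ω ≤ 0) → f ∈ C) (hQP : Q ≪ P)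
    {k : Ω → ℝ} (hk : Integrable k Q) (hkC : ∀ g ∈ C, ∫ ω, k ω * g ω ∂Q ≤ 0) {F : Ω → ℝ}
    (hF : ∀ Q' ∈ sepMeasures P C, ∫ ω, F ω ∂Q' ≤ 0) : ∫ ω, k ω * F ω ∂Q ≤ 0 := by
  have hk0 := ae_nonneg_of_forall_integral_mul_nonpos_s11 hCneg hk hkC
  rcases (integral_nonneg_of_ae hk0).eq_or_lt with hzero | hpos
  · have hk_ae : k =ᵐ[Q] 0 := (integral_eq_zero_iff_of_nonneg_ae hk0 hk).1 hzero.symm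
    rw [integral_eq_zero_of_ae (by filter_upwards [hk_ae] with ω hω; simp [hω])]
  set c := (∫ ω, k ω ∂Q)⁻¹
  have hc : 0 < c := inv_pos.2 hpos
  have hck0 : 0 ≤ᵐ[Q] fun ω => c * k ω := by
    filter_upwards [hk0] with ω hω; exact mul_nonneg hc.le hω
  have hck_int : ∀ φ : Ω → ℝ, ∫ ω, φ ω ∂Q.withDensity (fun ω => ENNReal.ofReal (c * k ω)) =
      c * ∫ ω, k ω * φ ω ∂Q := fun φ => by
    simp_rw [integral_withDensity_ofReal (hk.1.aemeasurable.const_mul c) hck0, mul_assoc,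
      integral_const_mul]
  have hQ' : Q.withDensity (fun ω => ENNReal.ofReal (c * k ω)) ∈ sepMeasures P C := by
    refine ⟨isProbabilityMeasure_withDensity_ofReal (hk.const_mul c) hck0 ?_,
      (withDensity_absolutelyContinuous _ _).trans hQP, fun g hg => ?_⟩
    · rw [integral_const_mul, inv_mul_cancel₀ hpos.ne']
    · rw [hck_int]; exact mul_nonpos_of_nonneg_of_nonpos hc.le (hkC g hg)
  have := hF _ hQ'
  rw [hck_int] at this
  exact nonpos_of_mul_nonpos_right this hc

def l1Cone (Q : Measure Ω) (C : Set (Ω → ℝ)) (hC0 : (fun _ => (0 : ℝ)) ∈ C)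
    (hCcone : ∀ f ∈ C, ∀ g ∈ C, ∀ a b : ℝ, 0 ≤ a → 0 ≤ b →
      (fun ω => a * f ω + b * g ω) ∈ C) :
    PointedCone ℝ (Lp ℝ 1 Q) where
  carrier := {G | ∃ g ∈ C, ⇑G =ᵐ[Q] g}
  zero_mem' := ⟨_, hC0, Lp.coeFn_zero ℝ 1 Q⟩
  add_mem' := by
    rintro G₁ G₂ ⟨g₁, hg₁, hG₁⟩ ⟨g₂, hg₂, hG₂⟩
    refine ⟨_, hCcone g₁ hg₁ g₂ hg₂ 1 1 zero_le_one zero_le_one, ?_⟩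
    filter_upwards [Lp.coeFn_add G₁ G₂, hG₁, hG₂] with ω h h₁ h₂
    rw [h, Pi.add_apply, h₁, h₂]
    ring
  smul_mem' := by
    rintro ⟨c, hc⟩ G ⟨g, hg, hG⟩
    refine ⟨_, hCcone g hg g hg c 0 hc le_rfl, ?_⟩
    filter_upwards [Lp.coeFn_smul c G, hG] with ω h h'
    simp [Nonneg.mk_smul, h, h']

theorem exists_integral_abs_sub_lt_of_mem_closure {F : Ω → ℝ} (hF : Integrable F Q)
    (hFC : hF.toL1 F ∈ closure {G : Lp ℝ 1 Q | ∃ g ∈ C, ⇑G =ᵐ[Q] g}) {ε : ℝ} (hε : 0 < ε) :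
    ∃ g ∈ C, ∫ ω, |F ω - g ω| ∂Q < ε := by
  obtain ⟨G, ⟨g, hgC, hGg⟩, hdist⟩ := Metric.mem_closure_iff.1 hFC ε hε
  refine ⟨g, hgC, lt_of_eq_of_lt ?_ hdist⟩
  rw [L1.dist_eq_integral_dist]
  refine integral_congr_ae ?_
  filter_upwards [hF.coeFn_toL1, hGg] with ω h₁ h₂
  rw [h₁, h₂, Real.dist_eq]

theorem sub_mem_Cid_of_forall_integral_le (hCbdd : ∀ g ∈ C, MemLp g ∞ P)
    (hCcone : ∀ f ∈ C, ∀ g ∈ C, ∀ a b : ℝ, 0 ≤ a → 0 ≤ b →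
      (fun ω => a * f ω + b * g ω) ∈ C)
    (hCneg : ∀ f : Ω → ℝ, MemLp f ∞ P → (∀ᵐ ω ∂P, f ω ≤ 0) → f ∈ C)
    {f : Ω → ℝ} (hf : ∀ Q ∈ sepMeasures P C, Integrable f Q) {x : ℝ}
    (hx : ∀ Q ∈ sepMeasures P C, ∫ ω, f ω ∂Q ≤ x) : (fun ω => f ω - x) ∈ Cid P C := by
  intro Q hQ
  have : IsProbabilityMeasure Q := hQ.1
  have hF : Integrable (fun ω => f ω - x) Q := (hf Q hQ).sub (integrable_const x)
  refine ⟨hF, fun ε hε => exists_integral_abs_sub_lt_of_mem_closure hF ?_ hε⟩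
  by_contra hF_nmem
  have hC0 : (fun _ => (0 : ℝ)) ∈ C := hCneg _ (memLp_top_const 0) (.of_forall fun _ => le_rfl)
  obtain ⟨Λ, hΛC, hΛF⟩ :=
    ProperCone.hyperplane_separation_point (Submodule.closure (l1Cone Q C hC0 hCcone)) hF_nmem
  obtain ⟨h, rfl⟩ := exists_lpPairing_eq Λ
  have hkC : ∀ g ∈ C, ∫ ω, -h ω * g ω ∂Q ≤ 0 := by
    intro g hg
    have hgQ := (hCbdd g hg).integrable_of_absolutelyContinuous hQ.2.1
    have := hΛC _ (subset_closure ⟨g, hg, hgQ.coeFn_toL1⟩)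
    rw [lpPairing_mul_toL1 h hgQ] at this
    simpa [integral_neg] using this
  have hFM : ∀ Q' ∈ sepMeasures P C, ∫ ω, (f ω - x) ∂Q' ≤ 0 := fun Q' hQ' => by
    have : IsProbabilityMeasure Q' := hQ'.1
    rw [integral_sub (hf Q' hQ') (integrable_const x), integral_const]
    simpa using hx Q' hQ'
  have := integral_mul_nonpos_of_forall_integral_nonpos hCneg hQ.2.1
    (k := fun ω => -h ω) ((Lp.memLp h).integrable le_top).neg hkC hFM
  rw [lpPairing_mul_toL1 h hF] at hΛF
  simp only [neg_mul, integral_neg] at this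
  linarith

end SeparatingMeasures

theorem weak_superreplication_duality_id_general
    (P : Measure Ω)
    (C : Set (Ω → ℝ))
    (hCbdd : ∀ g ∈ C, MemLp g ⊤ P)
    (hCcone : ∀ f ∈ C, ∀ g ∈ C, ∀ a b : ℝ, 0 ≤ a → 0 ≤ b →
      (fun ω => a * f ω + b * g ω) ∈ C)
    (hCneg : ∀ f : Ω → ℝ, MemLp f ⊤ P → (∀ᵐ ω ∂P, f ω ≤ 0) → f ∈ C)
    (f : Ω → ℝ) (hf : ∀ Q ∈ sepMeasures P C, Integrable f Q) :
    sInf ((fun x : ℝ => (x : EReal)) '' {x : ℝ | (fun ω => f ω - x) ∈ Cid P C}) =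
      sSup ((fun Q : Measure Ω => ((∫ ω, f ω ∂Q : ℝ) : EReal)) '' sepMeasures P C) := by
  refine le_antisymm (EReal.le_of_forall_lt_iff_le.1 fun z hz => ?_)
    (sSup_le ?_)
  · refine sInf_le ⟨z, sub_mem_Cid_of_forall_integral_le hCbdd hCcone hCneg hf
      fun Q hQ => ?_, rfl⟩
    exact EReal.coe_le_coe_iff.1 ((le_sSup (Set.mem_image_of_mem _ hQ)).trans hz.le)
  · rintro _ ⟨Q, hQ, rfl⟩
    refine le_sInf ?_
    rintro _ ⟨x, hx, rfl⟩
    exact EReal.coe_le_coe_iff.2 (integral_le_of_sub_mem_Cid hCbdd hx hQ)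

/-- Corollary 4 of Biagini–Frittelli (weak super replication duality, case `Φ = id`): if
`M₁` contains a measure equivalent to `P` and `f ∈ L¹(Q)` for all `Q ∈ M₁`, then
`inf {x ∈ ℝ : f - x` lies in the `L¹(Q)`-closure of `C` for every `Q ∈ M₁} =
sup {E_Q[f] : Q ∈ M₁}` in `ℝ ∪ {+∞}`. -/
theorem weak_superreplication_duality_id
    (P : Measure Ω) [IsProbabilityMeasure P]
    (C : Set (Ω → ℝ))
    (hCbdd : ∀ g ∈ C, MemLp g ⊤ P)
    (hCcone : ∀ f ∈ C, ∀ g ∈ C, ∀ a b : ℝ, 0 ≤ a → 0 ≤ b →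
      (fun ω => a * f ω + b * g ω) ∈ C)
    (hCneg : ∀ f : Ω → ℝ, MemLp f ⊤ P → (∀ᵐ ω ∂P, f ω ≤ 0) → f ∈ C)
    (hM₁P : ∃ Q ∈ sepMeasures P C, P ≪ Q)
    (f : Ω → ℝ) (hf : ∀ Q ∈ sepMeasures P C, Integrable f Q) :
    sInf ((fun x : ℝ => (x : EReal)) '' {x : ℝ | (fun ω => f ω - x) ∈ Cid P C}) =
      sSup ((fun Q : Measure Ω => ((∫ ω, f ω ∂Q : ℝ) : EReal)) '' sepMeasures P C) :=
  weak_superreplication_duality_id_general P C hCbdd hCcone hCneg f hf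
end

section
/- In the one-period model on Ω = (0,1], a probability measure Q ≪ P with density values q_i(n) on J_n^i is a separating measure (i.e., α·X₁ ∈ L¹(Q) and E_Q[α·X₁] ≤ 0 for every admissible strategy α) if and only if q₁(n) = n·q₂(n) for every n ≥ 1. -/
open MeasureTheory

/-- `P`: Lebesgue measure restricted to `Ω = (0,1]`. -/
noncomputable def Pmeas : Measure ℝ := MeasureTheory.volume.restrict (Set.Ioc 0 1)

/-- `I_n = (2^{-n}, 2^{-(n-1)}]` (intended for `n ≥ 1`). -/
def Iset (n : ℕ) : Set ℝ := Set.Ioc ((2 : ℝ) ^ n)⁻¹ ((2 : ℝ) ^ (n - 1))⁻¹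

/-- `J_n^1 = (2^{-n}, 3·2^{-(n+1)}]`. -/
def J1 (n : ℕ) : Set ℝ := Set.Ioc ((2 : ℝ) ^ n)⁻¹ (3 * ((2 : ℝ) ^ (n + 1))⁻¹)

/-- `J_n^2 = (3·2^{-(n+1)}, 2^{-(n-1)}]`. -/
def J2 (n : ℕ) : Set ℝ := Set.Ioc (3 * ((2 : ℝ) ^ (n + 1))⁻¹) ((2 : ℝ) ^ (n - 1))⁻¹

/-- A strategy: a function constant, equal to some `a n`, on each `I_n`. -/
def IsStrategy (α : ℝ → ℝ) : Prop :=
  ∃ a : ℕ → ℝ, ∀ n : ℕ, 1 ≤ n → ∀ ω ∈ Iset n, α ω = a n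

/-- An admissible strategy: a strategy whose gain `α·X₁` is bounded below by a constant
`-c`, `P`-a.s. -/
def IsAdmissible (X₁ α : ℝ → ℝ) : Prop :=
  IsStrategy α ∧ ∃ c : ℝ, 0 ≤ c ∧ ∀ᵐ ω ∂Pmeas, -c ≤ α ω * X₁ ω

/-!
Both `J_n^1` and `J_n^2` have `P`-measure `2^{-(n+1)}`, and on `I_n` the gain `α·X₁` of a strategy
with value `a_n` there equals `a_n n` on `J_n^1` and `-a_n n²` on `J_n^2`; hence
`E_Q[α·X₁; I_n] = a_n n (Q(J_n^1) - n Q(J_n^2))`. Holding `±1` units on a single `I_n` is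
admissible, which forces `Q(J_n^1) = n Q(J_n^2)`, i.e. `q₁(n) = n q₂(n)`. Conversely, since every
`J_n^i` has positive `P`-measure, admissibility with bound `c` gives `|a_n| n ≤ c`. Under the
relation, `E_Q[|α·X₁|; I_n] = 2 |a_n| n Q(J_n^1) ≤ 2c Q(I_n)`, which is summable, and every `I_n`
contributes `0` to `E_Q[α·X₁]`.
-/

open Set
open scoped ENNReal Function

section PiecewiseConstant

variable {α : Type*} [MeasurableSpace α] {μ : Measure α} {A B : Set α} {f : α → ℝ} {u v : ℝ}

lemma integrableOn_union_of_eqOn_const (hA : MeasurableSet A) (hB : MeasurableSet B)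
    (hμA : μ A ≠ ∞) (hμB : μ B ≠ ∞) (hfA : EqOn f (fun _ => u) A)
    (hfB : EqOn f (fun _ => v) B) : IntegrableOn f (A ∪ B) μ :=
  ((integrableOn_const hμA).congr_fun hfA.symm hA).union
    ((integrableOn_const hμB).congr_fun hfB.symm hB)

lemma setIntegral_union_of_eqOn_const (hA : MeasurableSet A) (hB : MeasurableSet B)
    (hμA : μ A ≠ ∞) (hμB : μ B ≠ ∞) (hAB : Disjoint A B) (hfA : EqOn f (fun _ => u) A)
    (hfB : EqOn f (fun _ => v) B) :
    ∫ x in A ∪ B, f x ∂μ = μ.real A * u + μ.real B * v := by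
  rw [setIntegral_union hAB hB ((integrableOn_const hμA).congr_fun hfA.symm hA)
      ((integrableOn_const hμB).congr_fun hfB.symm hB),
    setIntegral_congr_fun hA hfA, setIntegral_congr_fun hB hfB, setIntegral_const,
    setIntegral_const, smul_eq_mul, smul_eq_mul]

end PiecewiseConstant

lemma withDensity_ofReal_real_of_eqOn {α : Type*} [MeasurableSpace α] {μ : Measure α}
    {d : α → ℝ} {s : Set α} {q : ℝ} (hs : MeasurableSet s) (hq : 0 ≤ q)
    (hd : EqOn d (fun _ => q) s) :
    (μ.withDensity fun x => ENNReal.ofReal (d x)).real s = q * μ.real s := by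
  rw [measureReal_def, withDensity_apply _ hs,
    setLIntegral_congr_fun hs fun x hx => by rw [hd hx], setLIntegral_const,
    ENNReal.toReal_mul, ENNReal.toReal_ofReal hq, measureReal_def]

namespace OnePeriodModel

lemma Iset_zero : Iset 0 = ∅ := by simp [Iset]

lemma pairwise_disjoint_Iset : Pairwise (Disjoint on Iset) := by
  have hanti : Antitone fun n : ℕ => ((2 : ℝ) ^ n)⁻¹ := fun m n hmn =>
    inv_anti₀ (by positivity) (pow_le_pow_right₀ one_le_two hmn)
  have h := hanti.pairwise_disjoint_on_Ioc_pred
  simp only [Order.pred_eq_sub_one] at h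
  exact h

lemma Ioc_zero_one_subset_iUnion_Iset : Ioc (0 : ℝ) 1 ⊆ ⋃ n, Iset n := by
  rintro ω ⟨hω₀, hω₁⟩
  obtain ⟨n, hlt, hle⟩ :=
    exists_nat_pow_near_of_lt_one hω₀ hω₁ (by norm_num : (0 : ℝ) < 2⁻¹) (by norm_num)
  exact mem_iUnion.2 ⟨n + 1, by simpa [Iset, inv_pow] using And.intro hlt hle⟩

lemma Iset_subset_Ioc_zero_one (n : ℕ) : Iset n ⊆ Ioc 0 1 :=
  Ioc_subset_Ioc (by positivity) (inv_le_one_of_one_le₀ (one_le_pow₀ one_le_two))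

lemma inv_two_pow_eq (n : ℕ) : ((2 : ℝ) ^ n)⁻¹ = 2 * ((2 : ℝ) ^ (n + 1))⁻¹ := by
  rw [pow_succ, mul_inv, mul_left_comm, mul_inv_cancel₀ two_ne_zero, mul_one]

lemma inv_two_pow_sub_one_eq {n : ℕ} (hn : 1 ≤ n) :
    ((2 : ℝ) ^ (n - 1))⁻¹ = 4 * ((2 : ℝ) ^ (n + 1))⁻¹ := by
  rw [inv_two_pow_eq, Nat.sub_add_cancel hn, inv_two_pow_eq, ← mul_assoc]
  norm_num

lemma J1_eq (n : ℕ) : J1 n = Ioc (2 * ((2 : ℝ) ^ (n + 1))⁻¹) (3 * ((2 : ℝ) ^ (n + 1))⁻¹) := by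
  rw [J1, inv_two_pow_eq]

lemma J2_eq {n : ℕ} (hn : 1 ≤ n) :
    J2 n = Ioc (3 * ((2 : ℝ) ^ (n + 1))⁻¹) (4 * ((2 : ℝ) ^ (n + 1))⁻¹) := by
  rw [J2, inv_two_pow_sub_one_eq hn]

lemma Iset_eq {n : ℕ} (hn : 1 ≤ n) :
    Iset n = Ioc (2 * ((2 : ℝ) ^ (n + 1))⁻¹) (4 * ((2 : ℝ) ^ (n + 1))⁻¹) := by
  rw [Iset, inv_two_pow_eq, inv_two_pow_sub_one_eq hn]

lemma J1_union_J2 {n : ℕ} (hn : 1 ≤ n) : J1 n ∪ J2 n = Iset n := by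
  have h : (0 : ℝ) ≤ ((2 : ℝ) ^ (n + 1))⁻¹ := by positivity
  rw [J1_eq, J2_eq hn, Iset_eq hn, Ioc_union_Ioc_eq_Ioc (by linarith) (by linarith)]

lemma disjoint_J1_J2 (n : ℕ) : Disjoint (J1 n) (J2 n) := Ioc_disjoint_Ioc_of_le le_rfl

lemma J1_subset_Iset {n : ℕ} (hn : 1 ≤ n) : J1 n ⊆ Iset n :=
  J1_union_J2 hn ▸ subset_union_left

lemma J2_subset_Iset {n : ℕ} (hn : 1 ≤ n) : J2 n ⊆ Iset n :=
  J1_union_J2 hn ▸ subset_union_right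

lemma measurableSet_Iset (n : ℕ) : MeasurableSet (Iset n) := measurableSet_Ioc

lemma measurableSet_J1 (n : ℕ) : MeasurableSet (J1 n) := measurableSet_Ioc

lemma measurableSet_J2 (n : ℕ) : MeasurableSet (J2 n) := measurableSet_Ioc

lemma Pmeas_real_of_subset {s : Set ℝ} (hs : s ⊆ Ioc 0 1) : Pmeas.real s = volume.real s := by
  simp only [measureReal_def, Pmeas, Measure.restrict_eq_self _ hs]

lemma Pmeas_real_J1 {n : ℕ} (hn : 1 ≤ n) : Pmeas.real (J1 n) = ((2 : ℝ) ^ (n + 1))⁻¹ := by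
  have h : (0 : ℝ) ≤ ((2 : ℝ) ^ (n + 1))⁻¹ := by positivity
  rw [Pmeas_real_of_subset ((J1_subset_Iset hn).trans (Iset_subset_Ioc_zero_one n)), J1_eq,
    Real.volume_real_Ioc_of_le (by linarith)]
  ring

lemma Pmeas_real_J2 {n : ℕ} (hn : 1 ≤ n) : Pmeas.real (J2 n) = ((2 : ℝ) ^ (n + 1))⁻¹ := by
  have h : (0 : ℝ) ≤ ((2 : ℝ) ^ (n + 1))⁻¹ := by positivity
  rw [Pmeas_real_of_subset ((J2_subset_Iset hn).trans (Iset_subset_Ioc_zero_one n)), J2_eq hn,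
    Real.volume_real_Ioc_of_le (by linarith)]
  ring

lemma ae_Pmeas_mem_iUnion_Iset : ∀ᵐ ω ∂Pmeas, ω ∈ ⋃ n, Iset n :=
  (ae_restrict_mem measurableSet_Ioc).mono fun _ hω => Ioc_zero_one_subset_iUnion_Iset hω

def IsSeparating (X₁ : ℝ → ℝ) (Q : Measure ℝ) : Prop :=
  ∀ α : ℝ → ℝ, IsAdmissible X₁ α →
    Integrable (fun ω => α ω * X₁ ω) Q ∧ ∫ ω, α ω * X₁ ω ∂Q ≤ 0

variable {X₁ α : ℝ → ℝ} {n : ℕ} {s : ℝ}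

lemma gain_of_mem_J1 (hn : 1 ≤ n) (hX : ∀ ω ∈ J1 n, X₁ ω = n) (hα : ∀ ω ∈ Iset n, α ω = s)
    {ω : ℝ} (hω : ω ∈ J1 n) : α ω * X₁ ω = s * n := by
  rw [hα ω (J1_subset_Iset hn hω), hX ω hω]

lemma gain_of_mem_J2 (hn : 1 ≤ n) (hX : ∀ ω ∈ J2 n, X₁ ω = -((n : ℝ) ^ 2))
    (hα : ∀ ω ∈ Iset n, α ω = s) {ω : ℝ} (hω : ω ∈ J2 n) : α ω * X₁ ω = -(s * n ^ 2) := by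
  rw [hα ω (J2_subset_Iset hn hω), hX ω hω, mul_neg]

variable {Q : Measure ℝ} [IsFiniteMeasure Q]

lemma integrableOn_gain_Iset (hn : 1 ≤ n)
    (hX : (∀ ω ∈ J1 n, X₁ ω = n) ∧ (∀ ω ∈ J2 n, X₁ ω = -((n : ℝ) ^ 2)))
    (hα : ∀ ω ∈ Iset n, α ω = s) : IntegrableOn (fun ω => α ω * X₁ ω) (Iset n) Q :=
  J1_union_J2 hn ▸ integrableOn_union_of_eqOn_const (measurableSet_J1 n) (measurableSet_J2 n)
    (measure_ne_top Q _) (measure_ne_top Q _)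
    (fun _ => gain_of_mem_J1 hn hX.1 hα) (fun _ => gain_of_mem_J2 hn hX.2 hα)

lemma setIntegral_gain_Iset (hn : 1 ≤ n)
    (hX : (∀ ω ∈ J1 n, X₁ ω = n) ∧ (∀ ω ∈ J2 n, X₁ ω = -((n : ℝ) ^ 2)))
    (hα : ∀ ω ∈ Iset n, α ω = s) :
    ∫ ω in Iset n, α ω * X₁ ω ∂Q = s * n * (Q.real (J1 n) - n * Q.real (J2 n)) := by
  rw [← J1_union_J2 hn, setIntegral_union_of_eqOn_const (measurableSet_J1 n)
    (measurableSet_J2 n) (measure_ne_top Q _) (measure_ne_top Q _) (disjoint_J1_J2 n)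
    (fun _ => gain_of_mem_J1 hn hX.1 hα) (fun _ => gain_of_mem_J2 hn hX.2 hα)]
  ring

lemma setIntegral_norm_gain_Iset (hn : 1 ≤ n)
    (hX : (∀ ω ∈ J1 n, X₁ ω = n) ∧ (∀ ω ∈ J2 n, X₁ ω = -((n : ℝ) ^ 2)))
    (hα : ∀ ω ∈ Iset n, α ω = s) :
    ∫ ω in Iset n, ‖α ω * X₁ ω‖ ∂Q = |s| * n * (Q.real (J1 n) + n * Q.real (J2 n)) := by
  rw [← J1_union_J2 hn, setIntegral_union_of_eqOn_const (u := |s| * n) (v := |s| * n ^ 2)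
    (measurableSet_J1 n) (measurableSet_J2 n) (measure_ne_top Q _) (measure_ne_top Q _)
    (disjoint_J1_J2 n)
    (fun ω hω => by simp [gain_of_mem_J1 hn hX.1 hα hω])
    (fun ω hω => by simp [gain_of_mem_J2 hn hX.2 hα hω])]
  ring

lemma abs_mul_le_of_ae_le (hn : 1 ≤ n)
    (hX : (∀ ω ∈ J1 n, X₁ ω = n) ∧ (∀ ω ∈ J2 n, X₁ ω = -((n : ℝ) ^ 2)))
    (hα : ∀ ω ∈ Iset n, α ω = s) {c : ℝ} (hc : ∀ᵐ ω ∂Pmeas, -c ≤ α ω * X₁ ω) :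
    |s| * n ≤ c := by
  have hex {t : Set ℝ} (ht : Pmeas.real t = ((2 : ℝ) ^ (n + 1))⁻¹) :
      ∃ ω ∈ t, -c ≤ α ω * X₁ ω := by
    refine Measure.exists_mem_of_measure_ne_zero_of_ae (fun h0 => ?_) (ae_restrict_of_ae hc)
    rw [measureReal_def, h0, ENNReal.toReal_zero] at ht
    exact (inv_ne_zero (by positivity)) ht.symm
  obtain ⟨ω₁, hω₁, h₁⟩ := hex (Pmeas_real_J1 hn)
  obtain ⟨ω₂, hω₂, h₂⟩ := hex (Pmeas_real_J2 hn)
  rw [gain_of_mem_J1 hn hX.1 hα hω₁] at h₁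
  rw [gain_of_mem_J2 hn hX.2 hα hω₂] at h₂
  have hn' : (1 : ℝ) ≤ n := by exact_mod_cast hn
  rcases abs_cases s with ⟨hs, hs0⟩ | ⟨hs, hs0⟩ <;> rw [hs] <;> nlinarith

lemma isAdmissible_indicator_Iset
    (hX₁ : ∀ n : ℕ, 1 ≤ n → (∀ ω ∈ J1 n, X₁ ω = n) ∧ (∀ ω ∈ J2 n, X₁ ω = -((n : ℝ) ^ 2)))
    (hn : 1 ≤ n) (hs : |s| ≤ 1) : IsAdmissible X₁ ((Iset n).indicator fun _ => s) := by
  have hα : ∀ ω ∈ Iset n, (Iset n).indicator (fun _ => s) ω = s := fun ω hω =>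
    indicator_of_mem hω _
  refine ⟨⟨fun m => if m = n then s else 0, fun m _ ω hω => ?_⟩, (n : ℝ) ^ 2, by positivity,
    ae_of_all _ fun ω => ?_⟩
  · dsimp only
    split_ifs with hmn
    · exact hα ω (hmn ▸ hω)
    · exact indicator_of_notMem (fun h => (pairwise_disjoint_Iset hmn).ne_of_mem hω h rfl) _
  have hn' : (1 : ℝ) ≤ n := by exact_mod_cast hn
  obtain ⟨hs₁, hs₂⟩ := abs_le.1 hs
  by_cases hω : ω ∈ Iset n
  · rcases (J1_union_J2 hn).symm ▸ hω with hω | hω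
    · rw [gain_of_mem_J1 hn (hX₁ n hn).1 hα hω]
      nlinarith
    · rw [gain_of_mem_J2 hn (hX₁ n hn).2 hα hω]
      nlinarith
  · rw [indicator_of_notMem hω, zero_mul, neg_nonpos]
    positivity

lemma IsSeparating.measureReal_J1_eq
    (hX₁ : ∀ n : ℕ, 1 ≤ n → (∀ ω ∈ J1 n, X₁ ω = n) ∧ (∀ ω ∈ J2 n, X₁ ω = -((n : ℝ) ^ 2)))
    (hQ : IsSeparating X₁ Q) (hn : 1 ≤ n) : Q.real (J1 n) = n * Q.real (J2 n) := by
  have hle (s : ℝ) (hs : |s| = 1) : s * n * (Q.real (J1 n) - n * Q.real (J2 n)) ≤ 0 := by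
    have hα : ∀ ω ∈ Iset n, (Iset n).indicator (fun _ => s) ω = s := fun ω hω =>
      indicator_of_mem hω _
    rw [← setIntegral_gain_Iset hn (hX₁ n hn) hα, setIntegral_eq_integral_of_forall_compl_eq_zero
      fun ω hω => by rw [indicator_of_notMem hω, zero_mul]]
    exact (hQ _ (isAdmissible_indicator_Iset hX₁ hn hs.le)).2
  have hD : (n : ℝ) * (Q.real (J1 n) - n * Q.real (J2 n)) = 0 := by
    linarith [hle 1 abs_one, hle (-1) (by simp)]
  rw [mul_eq_zero, sub_eq_zero] at hD
  exact hD.resolve_left (by positivity)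

lemma isSeparating_of_measureReal_J1_eq
    (hX₁ : ∀ n : ℕ, 1 ≤ n → (∀ ω ∈ J1 n, X₁ ω = n) ∧ (∀ ω ∈ J2 n, X₁ ω = -((n : ℝ) ^ 2)))
    (hQ : Q ≪ Pmeas) (hrel : ∀ n : ℕ, 1 ≤ n → Q.real (J1 n) = n * Q.real (J2 n)) :
    IsSeparating X₁ Q := by
  rintro α ⟨⟨a, ha⟩, c, hc₀, hc⟩
  have hpiece (n : ℕ) : IntegrableOn (fun ω => α ω * X₁ ω) (Iset n) Q ∧
      ∫ ω in Iset n, α ω * X₁ ω ∂Q = 0 ∧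
      ∫ ω in Iset n, ‖α ω * X₁ ω‖ ∂Q ≤ 2 * c * Q.real (Iset n) := by
    rcases Nat.eq_zero_or_pos n with rfl | hn
    · simp [Iset_zero]
    refine ⟨integrableOn_gain_Iset hn (hX₁ n hn) (ha n hn), ?_, ?_⟩
    · rw [setIntegral_gain_Iset hn (hX₁ n hn) (ha n hn), hrel n hn, sub_self, mul_zero]
    · rw [setIntegral_norm_gain_Iset hn (hX₁ n hn) (ha n hn), ← hrel n hn]
      calc |a n| * n * (Q.real (J1 n) + Q.real (J1 n)) = 2 * (|a n| * n) * Q.real (J1 n) := by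
            ring
        _ ≤ 2 * c * Q.real (Iset n) :=
          mul_le_mul (by linarith [abs_mul_le_of_ae_le hn (hX₁ n hn) (ha n hn) hc])
            (measureReal_mono (J1_subset_Iset hn)) measureReal_nonneg (by linarith)
  have hQ_restrict : Q.restrict (⋃ n, Iset n) = Q :=
    Measure.restrict_eq_self_of_ae_mem (hQ.ae_le ae_Pmeas_mem_iUnion_Iset)
  have hint : IntegrableOn (fun ω => α ω * X₁ ω) (⋃ n, Iset n) Q :=
    integrableOn_iUnion_of_summable_integral_norm (fun n => (hpiece n).1)
      (Summable.of_nonneg_of_le (fun _ => integral_nonneg fun _ => norm_nonneg _)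
        (fun n => (hpiece n).2.2)
        ((summable_measure_toReal measurableSet_Iset pairwise_disjoint_Iset).mul_left (2 * c)))
  refine ⟨by rwa [IntegrableOn, hQ_restrict] at hint, ?_⟩
  rw [← hQ_restrict, integral_iUnion measurableSet_Iset pairwise_disjoint_Iset hint,
    tsum_congr fun n => (hpiece n).2.1, tsum_zero]

lemma isSeparating_iff_measureReal_J1_eq
    (hX₁ : ∀ n : ℕ, 1 ≤ n → (∀ ω ∈ J1 n, X₁ ω = n) ∧ (∀ ω ∈ J2 n, X₁ ω = -((n : ℝ) ^ 2)))
    (hQ : Q ≪ Pmeas) :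
    IsSeparating X₁ Q ↔ ∀ n : ℕ, 1 ≤ n → Q.real (J1 n) = n * Q.real (J2 n) :=
  ⟨fun h _ hn => h.measureReal_J1_eq hX₁ hn, isSeparating_of_measureReal_J1_eq hX₁ hQ⟩

end OnePeriodModel

open OnePeriodModel

theorem separating_iff_density_relation_general
    (X₁ : ℝ → ℝ)
    (hX₁ : ∀ n : ℕ, 1 ≤ n →
      (∀ ω ∈ J1 n, X₁ ω = (n : ℝ)) ∧ (∀ ω ∈ J2 n, X₁ ω = -((n : ℝ) ^ 2)))
    (q₁ q₂ : ℕ → ℝ) (hq₁ : ∀ n, 0 ≤ q₁ n) (hq₂ : ∀ n, 0 ≤ q₂ n)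
    (d : ℝ → ℝ)
    (hdJ : ∀ n : ℕ, 1 ≤ n → (∀ ω ∈ J1 n, d ω = q₁ n) ∧ (∀ ω ∈ J2 n, d ω = q₂ n))
    (Q : Measure ℝ)
    (hQ : Q = Pmeas.withDensity (fun ω => ENNReal.ofReal (d ω)))
    (hQp : IsProbabilityMeasure Q) :
    (∀ α : ℝ → ℝ, IsAdmissible X₁ α →
        Integrable (fun ω => α ω * X₁ ω) Q ∧ ∫ ω, α ω * X₁ ω ∂Q ≤ 0) ↔
      ∀ n : ℕ, 1 ≤ n → q₁ n = (n : ℝ) * q₂ n := by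
  have hQJ1 (n : ℕ) (hn : 1 ≤ n) : Q.real (J1 n) = q₁ n * ((2 : ℝ) ^ (n + 1))⁻¹ := by
    rw [hQ, withDensity_ofReal_real_of_eqOn (measurableSet_J1 n) (hq₁ n) (hdJ n hn).1,
      Pmeas_real_J1 hn]
  have hQJ2 (n : ℕ) (hn : 1 ≤ n) : Q.real (J2 n) = q₂ n * ((2 : ℝ) ^ (n + 1))⁻¹ := by
    rw [hQ, withDensity_ofReal_real_of_eqOn (measurableSet_J2 n) (hq₂ n) (hdJ n hn).2,
      Pmeas_real_J2 hn]
  have hac : Q ≪ Pmeas := hQ ▸ withDensity_absolutelyContinuous _ _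
  refine (isSeparating_iff_measureReal_J1_eq hX₁ hac).trans (forall₂_congr fun n hn => ?_)
  rw [hQJ1 n hn, hQJ2 n hn, ← mul_assoc, mul_left_inj' (by positivity)]

/-- Characterization of separating measures in the one-period model of Example 8 of
Biagini–Frittelli: a probability `Q ≪ P` with density constantly `q₁ n` on `J_n^1` and
`q₂ n` on `J_n^2` satisfies `α·X₁ ∈ L¹(Q)` and `E_Q[α·X₁] ≤ 0` for every admissible
strategy `α` iff `q₁ n = n · q₂ n` for every `n ≥ 1`. -/
theorem separating_iff_density_relation
    (X₁ : ℝ → ℝ)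
    (hX₁ : ∀ n : ℕ, 1 ≤ n →
      (∀ ω ∈ J1 n, X₁ ω = (n : ℝ)) ∧ (∀ ω ∈ J2 n, X₁ ω = -((n : ℝ) ^ 2)))
    (q₁ q₂ : ℕ → ℝ) (hq₁ : ∀ n, 0 ≤ q₁ n) (hq₂ : ∀ n, 0 ≤ q₂ n)
    (d : ℝ → ℝ) (hd : Measurable d)
    (hdJ : ∀ n : ℕ, 1 ≤ n → (∀ ω ∈ J1 n, d ω = q₁ n) ∧ (∀ ω ∈ J2 n, d ω = q₂ n))
    (Q : Measure ℝ)
    (hQ : Q = Pmeas.withDensity (fun ω => ENNReal.ofReal (d ω)))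
    (hQp : IsProbabilityMeasure Q) :
    (∀ α : ℝ → ℝ, IsAdmissible X₁ α →
        Integrable (fun ω => α ω * X₁ ω) Q ∧ ∫ ω, α ω * X₁ ω ∂Q ≤ 0) ↔
      ∀ n : ℕ, 1 ≤ n → q₁ n = (n : ℝ) * q₂ n :=
  separating_iff_density_relation_general X₁ hX₁ q₁ q₂ hq₁ hq₂ d hdJ Q hQ hQp
end

section
/- In the one-period model on Ω = (0,1], let f : Ω → ℝ take the value 1 on J_n^1 and −n on J_n^2 for every n ≥ 1. Then: (i) for every separating measure Q (i.e., every probability Q ≪ P with density satisfying q₁(n) = n·q₂(n) for all n), f ∈ L¹(Q) and E_Q[f] = 0; (ii) for x ∈ ℝ, there exists an admissible strategy α with x + α·X₁ ≥ f P-a.s. if and only if x ≥ 1. In particular the super replication price of f equals 1 while sup over separating measures Q of E_Q[f] equals 0. -/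
/-!
All computations take place on the partition of `(0,1]` into the intervals `J_n^1`, `J_n^2`,
which both have length `2^{-(n+1)}`. A separating density satisfies `q₁(n) = n q₂(n)`, so under
`Q` the positive part of `f` (equal to `1` on `J_n^1`) and its negative part (equal to `n` on
`J_n^2`) have the same integral `∑ q₁(n) 2^{-(n+1)} ≤ 1`; hence `f ∈ L¹(Q)` and `E_Q[f] = 0`.

A strategy is a single number `α_n` on `I_n`. Superreplication on `J_n^1` requires
`n α_n ≥ 1 - x`, while admissibility on `J_n^2` requires `n² α_n ≤ c`; thus `n (1 - x) ≤ c` for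
every `n`, i.e. `x ≥ 1`. Conversely `α = 0` superreplicates from `x = 1`, as `f ≤ 1`.
-/

open MeasureTheory

/-- The separating measures of the one-period model, described through their densities:
probabilities `Q ≪ P` with density constantly `q₁ n` on `J_n^1`, `q₂ n` on `J_n^2` and
`q₁ n = n · q₂ n` for all `n ≥ 1`. -/
def SepD : Set (Measure ℝ) :=
  {Q | IsProbabilityMeasure Q ∧ ∃ q₁ q₂ : ℕ → ℝ, (∀ n, 0 ≤ q₁ n) ∧ (∀ n, 0 ≤ q₂ n) ∧
    (∀ n : ℕ, 1 ≤ n → q₁ n = (n : ℝ) * q₂ n) ∧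
    ∃ d : ℝ → ℝ, Measurable d ∧
      (∀ n : ℕ, 1 ≤ n → (∀ ω ∈ J1 n, d ω = q₁ n) ∧ (∀ ω ∈ J2 n, d ω = q₂ n)) ∧
      Q = Pmeas.withDensity (fun ω => ENNReal.ofReal (d ω))}

open Set ENNReal Function

lemma Iset_succ (m : ℕ) : Iset (m + 1) = Ioc ((2⁻¹ : ℝ) ^ (m + 1)) (2⁻¹ ^ m) := by
  simp [Iset, inv_pow]

lemma J1_succ (m : ℕ) : J1 (m + 1) = Ioc ((2⁻¹ : ℝ) ^ (m + 1)) (3 / 4 * 2⁻¹ ^ m) := by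
  simp only [J1, ← inv_pow]; congr 1; ring

lemma J2_succ (m : ℕ) : J2 (m + 1) = Ioc (3 / 4 * (2⁻¹ : ℝ) ^ m) (2⁻¹ ^ m) := by
  simp only [J2, ← inv_pow, Nat.add_sub_cancel]; congr 1; ring

lemma J1_union_J2 (m : ℕ) : J1 (m + 1) ∪ J2 (m + 1) = Iset (m + 1) := by
  have : (0 : ℝ) < 2⁻¹ ^ m := by positivity
  rw [J1_succ, J2_succ, Iset_succ, Ioc_union_Ioc_eq_Ioc] <;>
    linarith [pow_succ (2⁻¹ : ℝ) m]

lemma J1_subset_Iset (m : ℕ) : J1 (m + 1) ⊆ Iset (m + 1) :=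
  J1_union_J2 m ▸ subset_union_left

lemma J2_subset_Iset (m : ℕ) : J2 (m + 1) ⊆ Iset (m + 1) :=
  J1_union_J2 m ▸ subset_union_right

lemma disjoint_J1_J2 (n : ℕ) : Disjoint (J1 n) (J2 n) :=
  Ioc_disjoint_Ioc_of_le le_rfl

lemma pairwise_disjoint_Iset_succ : Pairwise (Disjoint on fun m => Iset (m + 1)) := by
  have key : ∀ m k : ℕ, m < k → Disjoint (Iset (m + 1)) (Iset (k + 1)) := fun m k hmk => by
    rw [Iset_succ, Iset_succ]
    exact (Ioc_disjoint_Ioc_of_le (pow_le_pow_of_le_one (by norm_num) (by norm_num) hmk)).symm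
  intro m k hmk
  rcases hmk.lt_or_gt with h | h
  · exact key m k h
  · exact (key k m h).symm

lemma iUnion_Iset_succ : ⋃ m, Iset (m + 1) = Ioc 0 1 := by
  apply Subset.antisymm
  · refine iUnion_subset fun m => ?_
    rw [Iset_succ]
    exact Ioc_subset_Ioc (by positivity) (pow_le_one₀ (by norm_num) (by norm_num))
  · rintro ω ⟨hω₀, hω₁⟩
    obtain ⟨m, hm⟩ := exists_nat_pow_near_of_lt_one hω₀ hω₁ (by norm_num : (0 : ℝ) < 2⁻¹)
      (by norm_num)
    exact mem_iUnion.2 ⟨m, Iset_succ m ▸ hm⟩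

lemma volume_J1 (m : ℕ) : volume (J1 (m + 1)) = .ofReal ((2⁻¹ : ℝ) ^ m / 4) := by
  rw [J1_succ, Real.volume_Ioc, pow_succ]; ring_nf

lemma volume_J2 (m : ℕ) : volume (J2 (m + 1)) = .ofReal ((2⁻¹ : ℝ) ^ m / 4) := by
  rw [J2_succ, Real.volume_Ioc]; ring_nf

lemma Pmeas_eq_restrict_iUnion : Pmeas = volume.restrict (⋃ m, Iset (m + 1)) := by
  rw [iUnion_Iset_succ, Pmeas]

lemma Pmeas_J1_ne_zero (m : ℕ) : Pmeas (J1 (m + 1)) ≠ 0 := by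
  rw [Pmeas_eq_restrict_iUnion, Measure.restrict_eq_self _
    ((J1_subset_Iset m).trans (subset_iUnion (fun k => Iset (k + 1)) m)), volume_J1]
  exact (ofReal_pos.2 (by positivity)).ne'

lemma Pmeas_J2_ne_zero (m : ℕ) : Pmeas (J2 (m + 1)) ≠ 0 := by
  rw [Pmeas_eq_restrict_iUnion, Measure.restrict_eq_self _
    ((J2_subset_Iset m).trans (subset_iUnion (fun k => Iset (k + 1)) m)), volume_J2]
  exact (ofReal_pos.2 (by positivity)).ne'

lemma measurableSet_Iset (n : ℕ) : MeasurableSet (Iset n) := measurableSet_Ioc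

lemma measurableSet_J1 (n : ℕ) : MeasurableSet (J1 n) := measurableSet_Ioc

lemma measurableSet_J2 (n : ℕ) : MeasurableSet (J2 n) := measurableSet_Ioc

lemma ae_Pmeas_mem_Ioc : ∀ᵐ ω ∂Pmeas, ω ∈ Ioc (0 : ℝ) 1 := ae_restrict_mem measurableSet_Ioc

lemma integrable_of_lintegral_ofReal_ne_top {α : Type*} [MeasurableSpace α] {μ : Measure α}
    {f : α → ℝ} (hf : AEStronglyMeasurable f μ) (hpos : ∫⁻ a, .ofReal (f a) ∂μ ≠ ∞)
    (hneg : ∫⁻ a, .ofReal (-f a) ∂μ ≠ ∞) : Integrable f μ :=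
  ((integrable_toReal_of_lintegral_ne_top hf.aemeasurable.ennreal_ofReal hpos).sub
    (integrable_toReal_of_lintegral_ne_top hf.aemeasurable.neg.ennreal_ofReal hneg)).congr
    (ae_of_all _ fun a => max_zero_sub_max_neg_zero_eq_self (f a))

def IsStepOnJ {β : Type*} (h : ℝ → β) (a b : ℕ → β) : Prop :=
  ∀ n : ℕ, 1 ≤ n → (∀ ω ∈ J1 n, h ω = a n) ∧ (∀ ω ∈ J2 n, h ω = b n)

namespace IsStepOnJ

variable {β γ : Type*} {h : ℝ → β} {a b : ℕ → β}

lemma comp (hh : IsStepOnJ h a b) (g : β → γ) :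
    IsStepOnJ (fun ω => g (h ω)) (fun n => g (a n)) (fun n => g (b n)) := fun n hn =>
  ⟨fun ω hω => congrArg g ((hh n hn).1 ω hω), fun ω hω => congrArg g ((hh n hn).2 ω hω)⟩

lemma mul [Mul β] {h' : ℝ → β} {a' b' : ℕ → β} (hh : IsStepOnJ h a b)
    (hh' : IsStepOnJ h' a' b') :
    IsStepOnJ (fun ω => h ω * h' ω) (fun n => a n * a' n) (fun n => b n * b' n) := fun n hn =>
  ⟨fun ω hω => congrArg₂ (· * ·) ((hh n hn).1 ω hω) ((hh' n hn).1 ω hω),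
    fun ω hω => congrArg₂ (· * ·) ((hh n hn).2 ω hω) ((hh' n hn).2 ω hω)⟩

lemma ae_of_forall (hh : IsStepOnJ h a b) {p : β → Prop}
    (hp : ∀ n : ℕ, 1 ≤ n → p (a n) ∧ p (b n)) : ∀ᵐ ω ∂Pmeas, p (h ω) := by
  filter_upwards [ae_Pmeas_mem_Ioc] with ω hω
  rw [← iUnion_Iset_succ, mem_iUnion] at hω
  obtain ⟨m, hm⟩ := hω
  rw [← J1_union_J2] at hm
  rcases hm with hm | hm
  · exact (hh (m + 1) m.succ_pos).1 ω hm ▸ (hp (m + 1) m.succ_pos).1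
  · exact (hh (m + 1) m.succ_pos).2 ω hm ▸ (hp (m + 1) m.succ_pos).2

lemma aestronglyMeasurable [TopologicalSpace β] [TopologicalSpace.PseudoMetrizableSpace β]
    (hh : IsStepOnJ h a b) : AEStronglyMeasurable h Pmeas := by
  rw [Pmeas_eq_restrict_iUnion, aestronglyMeasurable_iUnion_iff]
  intro m
  rw [← J1_union_J2, aestronglyMeasurable_union_iff]
  exact ⟨aestronglyMeasurable_const.congr
      (ae_restrict_of_forall_mem (measurableSet_J1 _) fun ω hω => ((hh _ m.succ_pos).1 ω hω).symm),
    aestronglyMeasurable_const.congr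
      (ae_restrict_of_forall_mem (measurableSet_J2 _) fun ω hω => ((hh _ m.succ_pos).2 ω hω).symm)⟩

lemma lintegral_Pmeas {h : ℝ → ℝ≥0∞} {a b : ℕ → ℝ≥0∞} (hh : IsStepOnJ h a b) :
    ∫⁻ ω, h ω ∂Pmeas = ∑' m, (a (m + 1) + b (m + 1)) * .ofReal ((2⁻¹ : ℝ) ^ m / 4) := by
  rw [Pmeas_eq_restrict_iUnion,
    lintegral_iUnion (fun m => measurableSet_Iset (m + 1)) pairwise_disjoint_Iset_succ]
  refine tsum_congr fun m => ?_
  rw [← J1_union_J2, lintegral_union (measurableSet_J2 _) (disjoint_J1_J2 _),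
    setLIntegral_congr_fun (measurableSet_J1 _) (hh _ m.succ_pos).1,
    setLIntegral_congr_fun (measurableSet_J2 _) (hh _ m.succ_pos).2,
    setLIntegral_const, setLIntegral_const, volume_J1, volume_J2, add_mul]

end IsStepOnJ

section SeparatingMeasures

variable {f : ℝ → ℝ} {Q : Measure ℝ}

lemma absolutelyContinuous_Pmeas_of_mem_SepD (hQ : Q ∈ SepD) : Q ≪ Pmeas := by
  obtain ⟨-, -, -, -, -, -, d, -, -, rfl⟩ := hQ
  exact withDensity_absolutelyContinuous _ _

lemma lintegral_ofReal_neg_eq_of_mem_SepD (hf : IsStepOnJ f (fun _ => 1) (fun n => -(n : ℝ)))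
    (hQ : Q ∈ SepD) : ∫⁻ ω, .ofReal (-f ω) ∂Q = ∫⁻ ω, .ofReal (f ω) ∂Q := by
  obtain ⟨-, q₁, q₂, -, -, hq, d, hd_meas, hd, rfl⟩ := hQ
  have hd : IsStepOnJ (fun ω => ENNReal.ofReal (d ω)) _ _ := IsStepOnJ.comp hd ENNReal.ofReal
  simp only [lintegral_withDensity_eq_lintegral_mul_non_measurable _ hd_meas.ennreal_ofReal
    (ae_of_all _ fun _ => ofReal_lt_top), Pi.mul_apply]
  rw [(hd.mul (hf.comp fun y => ENNReal.ofReal (-y))).lintegral_Pmeas,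
    (hd.mul (hf.comp ENNReal.ofReal)).lintegral_Pmeas]
  refine tsum_congr fun m => ?_
  rw [hq (m + 1) m.succ_pos, ofReal_mul (Nat.cast_nonneg _), neg_neg,
    ofReal_of_nonpos (neg_nonpos.2 zero_le_one),
    ofReal_of_nonpos (neg_nonpos.2 (Nat.cast_nonneg _)), ofReal_one]
  ring

lemma lintegral_ofReal_le_one_of_mem_SepD (hf : IsStepOnJ f (fun _ => 1) (fun n => -(n : ℝ)))
    (hQ : Q ∈ SepD) : ∫⁻ ω, .ofReal (f ω) ∂Q ≤ 1 := by
  have : IsProbabilityMeasure Q := hQ.1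
  have hf_le : ∀ᵐ ω ∂Q, ENNReal.ofReal (f ω) ≤ 1 :=
    (absolutelyContinuous_Pmeas_of_mem_SepD hQ).ae_le <|
      hf.ae_of_forall (p := fun y => ENNReal.ofReal y ≤ 1) fun n _ =>
        ⟨by simp, ofReal_le_one.2 (by linarith [(n.cast_nonneg : (0 : ℝ) ≤ n)])⟩
  calc ∫⁻ ω, .ofReal (f ω) ∂Q ≤ ∫⁻ _, 1 ∂Q := lintegral_mono_ae hf_le
    _ = 1 := by simp

lemma integrable_and_integral_eq_zero_of_mem_SepD
    (hf : IsStepOnJ f (fun _ => 1) (fun n => -(n : ℝ))) (hQ : Q ∈ SepD) :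
    Integrable f Q ∧ ∫ ω, f ω ∂Q = 0 := by
  have hneg := lintegral_ofReal_neg_eq_of_mem_SepD hf hQ
  have hpos := (lintegral_ofReal_le_one_of_mem_SepD hf hQ).trans_lt one_lt_top
  have hint : Integrable f Q := integrable_of_lintegral_ofReal_ne_top
    (hf.aestronglyMeasurable.mono_ac (absolutelyContinuous_Pmeas_of_mem_SepD hQ)) hpos.ne
    (hneg ▸ hpos.ne)
  exact ⟨hint, by rw [integral_eq_lintegral_pos_part_sub_lintegral_neg_part hint, hneg, sub_self]⟩

end SeparatingMeasures

section Superreplication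

variable {X₁ f : ℝ → ℝ}

lemma exists_mem_of_ae_Pmeas {s : Set ℝ} (hs : Pmeas s ≠ 0) {p : ℝ → Prop}
    (hp : ∀ᵐ ω ∂Pmeas, p ω) : ∃ ω ∈ s, p ω :=
  Measure.exists_mem_of_measure_ne_zero_of_ae hs (ae_restrict_of_ae hp)

lemma one_le_of_superreplicates
    (hX₁ : IsStepOnJ X₁ (fun n => (n : ℝ)) (fun n => -((n : ℝ) ^ 2)))
    (hf : IsStepOnJ f (fun _ => 1) (fun n => -(n : ℝ))) {x : ℝ} {α : ℝ → ℝ}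
    (hα : IsAdmissible X₁ α) (hsup : ∀ᵐ ω ∂Pmeas, f ω ≤ x + α ω * X₁ ω) : 1 ≤ x := by
  obtain ⟨⟨a, ha⟩, c, -, hc⟩ := hα
  have key : ∀ m : ℕ, (1 - x) * (m + 1) ≤ c := fun m => by
    obtain ⟨ω₁, hω₁, h₁⟩ := exists_mem_of_ae_Pmeas (Pmeas_J1_ne_zero m) hsup
    obtain ⟨ω₂, hω₂, h₂⟩ := exists_mem_of_ae_Pmeas (Pmeas_J2_ne_zero m) hc
    rw [(hf _ m.succ_pos).1 ω₁ hω₁, (hX₁ _ m.succ_pos).1 ω₁ hω₁,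
      ha _ m.succ_pos ω₁ (J1_subset_Iset m hω₁)] at h₁
    rw [(hX₁ _ m.succ_pos).2 ω₂ hω₂, ha _ m.succ_pos ω₂ (J2_subset_Iset m hω₂)] at h₂
    push_cast at h₁ h₂
    nlinarith [(m.cast_nonneg : (0 : ℝ) ≤ m)]
  by_contra! hx
  obtain ⟨m, hm⟩ := exists_nat_gt (c / (1 - x))
  rw [div_lt_iff₀ (sub_pos.2 hx)] at hm
  linarith [key m]

lemma superreplicable_iff
    (hX₁ : IsStepOnJ X₁ (fun n => (n : ℝ)) (fun n => -((n : ℝ) ^ 2)))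
    (hf : IsStepOnJ f (fun _ => 1) (fun n => -(n : ℝ))) (x : ℝ) :
    (∃ α : ℝ → ℝ, IsAdmissible X₁ α ∧ ∀ᵐ ω ∂Pmeas, f ω ≤ x + α ω * X₁ ω) ↔ 1 ≤ x := by
  refine ⟨fun ⟨α, hα, hsup⟩ => one_le_of_superreplicates hX₁ hf hα hsup, fun hx => ?_⟩
  refine ⟨0, ⟨⟨0, fun _ _ _ _ => rfl⟩, 0, le_rfl, ae_of_all _ fun _ => by simp⟩, ?_⟩
  filter_upwards [hf.ae_of_forall (p := (· ≤ x)) fun n _ =>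
    ⟨hx, by linarith [(n.cast_nonneg : (0 : ℝ) ≤ n)]⟩] with ω hω
  simpa using hω

end Superreplication

lemma indicator_Iset_isStepOnJ (k : ℕ) (c : ℝ) :
    IsStepOnJ ((Iset (k + 1)).indicator fun _ => c) (fun n => if n = k + 1 then c else 0)
      (fun n => if n = k + 1 then c else 0) := by
  have key : ∀ m, ∀ ω ∈ Iset (m + 1),
      (Iset (k + 1)).indicator (fun _ => c) ω = if m + 1 = k + 1 then c else 0 := by
    intro m ω hω
    by_cases hmk : m = k
    · subst hmk
      simp [indicator_of_mem hω]
    · have : ω ∉ Iset (k + 1) := fun hω' =>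
        (pairwise_disjoint_Iset_succ hmk).notMem_of_mem_left hω hω'
      simp [indicator_of_notMem this, hmk]
  intro n hn
  obtain ⟨m, rfl⟩ := Nat.exists_eq_add_of_le' hn
  exact ⟨fun ω hω => key m ω (J1_subset_Iset m hω), fun ω hω => key m ω (J2_subset_Iset m hω)⟩

lemma withDensity_indicator_Iset_one_mem_SepD :
    Pmeas.withDensity (fun ω => .ofReal ((Iset 1).indicator (fun _ => (2 : ℝ)) ω)) ∈ SepD := by
  have hd := indicator_Iset_isStepOnJ 0 2
  refine ⟨⟨?_⟩, _, _, fun n => ?_, fun n => ?_, fun n hn => ?_, _,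
    measurable_const.indicator (measurableSet_Iset 1), hd, rfl⟩
  · rw [withDensity_apply _ MeasurableSet.univ, Measure.restrict_univ,
      (hd.comp ENNReal.ofReal).lintegral_Pmeas, tsum_eq_single 0 (fun m hm => by simp [hm])]
    rw [← ofReal_add, ← ofReal_mul] <;> norm_num
  all_goals split_ifs <;> simp_all

/-- Example 8 of Biagini–Frittelli: for the claim `f` equal to `1` on `J_n^1` and `-n` on
`J_n^2`: (i) `f ∈ L¹(Q)` and `E_Q[f] = 0` for every separating measure `Q`; (ii) `f - x`
is super-replicable by an admissible strategy iff `x ≥ 1`.  In particular the super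
replication price of `f` is `1` while `sup_Q E_Q[f] = 0` over separating measures. -/
theorem example8_claim_f
    (X₁ f : ℝ → ℝ)
    (hX₁ : ∀ n : ℕ, 1 ≤ n →
      (∀ ω ∈ J1 n, X₁ ω = (n : ℝ)) ∧ (∀ ω ∈ J2 n, X₁ ω = -((n : ℝ) ^ 2)))
    (hf : ∀ n : ℕ, 1 ≤ n →
      (∀ ω ∈ J1 n, f ω = 1) ∧ (∀ ω ∈ J2 n, f ω = -(n : ℝ))) :
    (∀ Q ∈ SepD, Integrable f Q ∧ ∫ ω, f ω ∂Q = 0) ∧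
    (∀ x : ℝ,
      (∃ α : ℝ → ℝ, IsAdmissible X₁ α ∧ ∀ᵐ ω ∂Pmeas, f ω ≤ x + α ω * X₁ ω) ↔ 1 ≤ x) ∧
    sInf {x : ℝ | ∃ α : ℝ → ℝ, IsAdmissible X₁ α ∧ ∀ᵐ ω ∂Pmeas, f ω ≤ x + α ω * X₁ ω}
      = 1 ∧
    sSup ((fun Q : Measure ℝ => ∫ ω, f ω ∂Q) '' SepD) = 0 := by
  have hsep Q (hQ : Q ∈ SepD) := integrable_and_integral_eq_zero_of_mem_SepD hf hQ
  have hsuper := superreplicable_iff hX₁ hf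
  have hprices : {x : ℝ | ∃ α : ℝ → ℝ, IsAdmissible X₁ α ∧
      ∀ᵐ ω ∂Pmeas, f ω ≤ x + α ω * X₁ ω} = Ici 1 := Set.ext hsuper
  have hQ₀ := withDensity_indicator_Iset_one_mem_SepD
  have hexpectations : (fun Q : Measure ℝ => ∫ ω, f ω ∂Q) '' SepD = {0} :=
    eq_singleton_iff_unique_mem.2
      ⟨⟨_, hQ₀, (hsep _ hQ₀).2⟩, by rintro _ ⟨Q, hQ, rfl⟩; exact (hsep Q hQ).2⟩
  exact ⟨hsep, hsuper, by rw [hprices, csInf_Ici], by rw [hexpectations, csSup_singleton]⟩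
end
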